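/- arXiv:alg-geom/9408007 — 2 statements merged into one kernel-verified Lean document; each statement's English description precedes it below -/
import Mathlib

section
/- The set of common zeros of F and Q in ℙ²(ℂ) is exactly {p2, p3, p4, p5}: each of p2, p3, p4, p5 satisfies F = Q = 0, and conversely every (x₀,y₀,z₀) ∈ ℂ³ \ {(0,0,0)} with F(x₀,y₀,z₀) = Q(x₀,y₀,z₀) = 0 represents one of the projective points p2, p3, p4, p5. (Thus the octic curve {F = 0} meets the conic {Q = 0} only at p2, p3, p4, p5.) -/
noncomputable section

open MvPolynomial

/-- The polynomial ring `ℂ[x,y,z]`. -/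
abbrev R3 : Type := MvPolynomial (Fin 3) ℂ

/-- `α = √17`. -/
def α : ℂ := Real.sqrt 17
/-- `β = √(21 + 5√17)`. -/
def β : ℂ := Real.sqrt (21 + 5 * Real.sqrt 17)
/-- `δ = √(5 + √17)`. -/
def δ : ℂ := Real.sqrt (5 + Real.sqrt 17)

def x : R3 := X 0
def y : R3 := X 1
def z : R3 := X 2

def A1 : R3 :=
  14408408592*x^4*y^2*z + 50076004923*x^4*z^3 + 14182182144*x^3*y^4
  + 219953469600*x^3*y^2*z^2 - 363210576777*x^3*z^4 - 1093337332608*x^2*y^2*z^3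
  + 831133690121*x^2*z^5 + 858975454416*x*y^2*z^4 - 772939669603*x*z^6
  + 254940551336*z^7

def A2 : R3 :=
  -72389196288*x^4*y^4 - 3335393797632*x^4*y^2*z^2 - 1065820046526*x^4*z^4
  - 8342111361024*x^3*y^4*z + 3945428471808*x^3*y^2*z^3 + 10184161263912*x^3*z^5
  + 20168534212608*x^2*y^4*z^2 + 53110876008192*x^2*y^2*z^4 - 32270723397636*x^2*z^6
  - 100932292129536*x*y^2*z^5 + 38252243189640*x*z^7 + 47211381447168*y^2*z^6
  - 15099861009390*z^8

def A3 : R3 :=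
  15490159728*x^4*y^2*z + 53840161671*x^4*z^3 + 15251365120*x^3*y^4
  + 236488232416*x^3*y^2*z^2 - 390512591333*x^3*z^4 - 1175521621376*x^2*y^2*z^3
  + 893608694925*x^2*z^5 + 923543229232*x*y^2*z^4 - 831040262535*x*z^6
  + 274103997272*z^7

def A4 : R3 :=
  59398585488*x^4*y^2*z + 206468708787*x^4*z^3 + 58496365824*x^3*y^4
  + 906899335584*x^3*y^2*z^2 - 1497555836337*x^3*z^4 - 4507944789888*x^2*y^2*z^3
  + 3426852351793*x^2*z^5 + 3541646868816*x*y^2*z^4 - 3186912029723*x*z^6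
  + 1051146805480*z^7

def A5 : R3 :=
  -466877917440*x^4*y^4 - 21516582641184*x^4*y^2*z^2 - 6875617032333*x^4*z^4
  - 53815549731840*x^3*y^4*z + 25451977456512*x^3*y^2*z^3 + 65698123816692*x^3*z^5
  + 130107481479168*x^2*y^4*z^2 + 342618718898784*x^2*y^2*z^4 - 208178748305934*x^2*z^6
  - 651115201689280*x*y^2*z^5 + 246765593291124*x*z^7 + 304561087975168*y^2*z^6
  - 97409351769549*z^8

def A6 : R3 :=
  -298344909312*x^4*y^4 - 13752106145280*x^4*y^2*z^2 - 4394491299054*x^4*z^4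
  - 34395989170176*x^3*y^4*z + 16267404201984*x^3*y^2*z^3 + 41990375439720*x^3*z^5
  + 83157067186176*x^2*y^4*z^2 + 218981688444672*x^2*y^2*z^4 - 133055599121316*x^2*z^6
  - 416154499902208*x*y^2*z^5 + 157718037119688*x*z^7 + 194657513400832*y^2*z^6
  - 62258322139038*z^8

def A7 : R3 :=
  191605550544*x^4*y^2*z + 665965983645*x^4*z^3 + 188641373952*x^3*y^4
  + 2925195141792*x^3*y^2*z^2 - 4830373865031*x^3*z^4 - 14540399432832*x^2*y^2*z^3
  + 11053328983807*x^2*z^5 + 11423598740496*x*y^2*z^4 - 10279400307101*x*z^6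
  + 3390479204680*z^7

def A8 : R3 :=
  -1925078503680*x^4*y^4 - 88715185482528*x^4*y^2*z^2 - 28348893570645*x^4*z^4
  - 221886790124544*x^3*y^4*z + 104941198124928*x^3*y^2*z^3 + 270880301999124*x^3*z^5
  + 536446841591808*x^2*y^4*z^2 + 1412653204386144*x^2*y^2*z^4 - 858342969385662*x^2*z^6
  - 2684616751584448*x*y^2*z^5 + 1017440607056532*x*z^7 + 1255737534555904*y^2*z^6
  - 401629046099349*z^8

/-- Werner's homogeneous octic `F`. -/
def F : R3 :=
  C (24*α*β*δ) * y * A1 + C (α*β) * A2 + C (144*α*δ) * y * A3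
  + C (24*β*δ) * y * A4 + C α * A5 + C β * A6 + C (48*δ) * y * A7 + A8

/-- The conic `Q`. -/
def Qpoly : R3 :=
  C (9*α*β+90*α+81*β+234) * x^2 + C (176*α*β+1568*α+1200*β+5920) * y^2
  + C (57*α*β+258*α+129*β+1170) * z^2 - C (48*α*β*δ+168*α*δ+48*β*δ+936*δ) * x * y
  - C (66*α*β+348*α+210*β+1404) * x * z + C (48*α*β*δ+168*α*δ+48*β*δ+936*δ) * y * z

/-- Coordinate representative of `p = [1:0:0]`. -/
def ptP : Fin 3 → ℂ := ![1, 0, 0]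
/-- Coordinate representative of `p1 = [0:1:0]`. -/
def ptP1 : Fin 3 → ℂ := ![0, 1, 0]
/-- Coordinate representative of `p2 = [10+4α+4β : 3δ : 6]`. -/
def ptP2 : Fin 3 → ℂ := ![10+4*α+4*β, 3*δ, 6]
/-- Coordinate representative of `p3 = [1:0:1]`. -/
def ptP3 : Fin 3 → ℂ := ![1, 0, 1]
/-- Coordinate representative of `p4 = [16+4α+4β : 3δ+6 : 12]`. -/
def ptP4 : Fin 3 → ℂ := ![16+4*α+4*β, 3*δ+6, 12]
/-- Coordinate representative of `p5 = [16+4α+4β : 3δ−6 : 12]`. -/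
def ptP5 : Fin 3 → ℂ := ![16+4*α+4*β, 3*δ-6, 12]

/-!
Modulo `Q`, the octic is a product of lines through `p1 = [0:1:0]`:
`F ≡ κ ℓ₂² ℓ₃² ℓ₄₅⁴`, where `ℓ₂, ℓ₃` join `p1` to `p2, p3` and `ℓ₄₅` joins `p1` to `p4` and `p5`.
Since `ℓ₂` and `ℓ₃` are tangent to `Q` at `p2` and `p3` and `ℓ₄₅` meets `Q` in `p4, p5`, the only
common zeros of `F` and `Q` are these four points. These congruences are polynomial identities
modulo `Q` and the relations `α² = 17`, `β² = 21 + 5α`, `δ² = 5 + α`, whose cofactors were found by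
computer algebra.
-/

/-- Vanishes exactly on the line joining `[0:1:0]` and `[q]` (for `q 2 ≠ 0`). -/
def lineThroughP1 {K : Type*} [CommRing K] (q P : Fin 3 → K) : K := P 0 * q 2 - q 0 * P 2

theorem lineThroughP1_self {K : Type*} [CommRing K] (q : Fin 3 → K) : lineThroughP1 q q = 0 :=
  sub_self _

theorem exists_ne_zero_eq_smul_of_lineThroughP1 {K : Type*} [Field K] {q P : Fin 3 → K}
    (hq : q 2 ≠ 0) (hP : P ≠ 0) (h0 : lineThroughP1 q P = 0) (h1 : P 1 * q 2 = q 1 * P 2) :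
    ∃ t : K, t ≠ 0 ∧ P = t • q := by
  have h : ∀ i, P i * q 2 = q i * P 2 := by
    intro i
    fin_cases i
    exacts [sub_eq_zero.1 h0, h1, mul_comm _ _]
  have hP2 : P 2 ≠ 0 := fun h2 => hP (funext fun i => by simpa [h2, hq] using h i)
  refine ⟨P 2 / q 2, div_ne_zero hP2 hq, funext fun i => ?_⟩
  rw [Pi.smul_apply, smul_eq_mul, div_mul_eq_mul_div, eq_div_iff hq, h i, mul_comm]

theorem α_sq : α ^ 2 = 17 := by
  unfold α; norm_cast; exact Real.sq_sqrt (by norm_num)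

theorem β_sq : β ^ 2 = 21 + 5 * α := by
  unfold β α; norm_cast; exact Real.sq_sqrt (by positivity)

theorem δ_sq : δ ^ 2 = 5 + α := by
  unfold δ α; norm_cast; exact Real.sq_sqrt (by positivity)

theorem Qpoly_coeff_y_sq_ne_zero : (176 * α * β + 1568 * α + 1200 * β + 5920 : ℂ) ≠ 0 := by
  unfold α β
  exact_mod_cast (by positivity :
    (0 : ℝ) < 176 * √17 * √(21 + 5 * √17) + 1568 * √17 + 1200 * √(21 + 5 * √17) + 5920).ne'

def κ : ℂ := -(761286 * α * β + 5048229 * α + 3145014 * β + 20804397) / 1024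

theorem κ_ne_zero : κ ≠ 0 := by
  unfold κ α β
  refine div_ne_zero (neg_ne_zero.2 ?_) (by norm_num)
  exact_mod_cast (by positivity : (0 : ℝ) <
    761286 * √17 * √(21 + 5 * √17) + 5048229 * √17 + 3145014 * √(21 + 5 * √17) + 20804397).ne'

theorem lineThroughP1_ptP5 : lineThroughP1 ptP5 = lineThroughP1 ptP4 := rfl

theorem eval_Qpoly (P : Fin 3 → ℂ) : eval P Qpoly =
    (9*α*β+90*α+81*β+234) * P 0 ^ 2 + (176*α*β+1568*α+1200*β+5920) * P 1 ^ 2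
    + (57*α*β+258*α+129*β+1170) * P 2 ^ 2 - (48*α*β*δ+168*α*δ+48*β*δ+936*δ) * P 0 * P 1
    - (66*α*β+348*α+210*β+1404) * P 0 * P 2 + (48*α*β*δ+168*α*δ+48*β*δ+936*δ) * P 1 * P 2 := by
  simp [Qpoly, x, y, z]

section

variable {P : Fin 3 → ℂ}

theorem eval_F_of_eval_Qpoly_eq_zero (hQ : eval P Qpoly = 0) :
    eval P F =
      κ * lineThroughP1 ptP2 P ^ 2 * lineThroughP1 ptP3 P ^ 2 * lineThroughP1 ptP4 P ^ 4 := by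
  rw [eval_Qpoly] at hQ
  simp only [F, A1, A2, A3, A4, A5, A6, A7, A8, x, y, z, map_add, map_sub, map_mul, map_pow,
    map_neg, map_ofNat, eval_C, eval_X, κ, lineThroughP1, ptP2, ptP3, ptP4, Matrix.cons_val]
  linear_combination (948996*α*β*δ*(P 0)^5*(P 1) - 30170772*α*β*δ*(P 0)^4*(P 1)*(P 2) +
    13784832*α*β*δ*(P 0)^3*(P 1)^3 + 361305864*α*β*δ*(P 0)^3*(P 1)*(P 2)^2 -
    1163097792*α*β*δ*(P 0)^2*(P 1)*(P 2)^3 + 831013704*α*β*δ*(P 0)*(P 1)*(P 2)^4 +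
    (1844127/4)*α*β*(P 0)^6 + (-28653669/2)*α*β*(P 0)^5*(P 2) + 13322124*α*β*(P 0)^4*(P 1)^2 +
    (787081077/4)*α*β*(P 0)^4*(P 2)^2 - 352582704*α*β*(P 0)^3*(P 1)^2*(P 2) -
    1383366087*α*β*(P 0)^3*(P 2)^3 + 813026400*α*β*(P 0)^2*(P 1)^2*(P 2)^2 +
    (8697044211/2)*α*β*(P 0)^2*(P 2)^4 - 5051168497*α*β*(P 0)*(P 2)^5 + 1903108012*α*β*(P 2)^6 +
    6341166*α*δ*(P 0)^5*(P 1) - 194849766*α*δ*(P 0)^4*(P 1)*(P 2) + 88483392*α*δ*(P 0)^3*(P 1)^3 +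
    2330908308*α*δ*(P 0)^3*(P 1)*(P 2)^2 - 7503293808*α*δ*(P 0)^2*(P 1)*(P 2)^3 +
    5360894100*α*δ*(P 0)*(P 1)*(P 2)^4 + (4691115/2)*α*(P 0)^6 - 90857295*α*(P 0)^5*(P 2) +
    85727592*α*(P 0)^4*(P 1)^2 + (2535257853/2)*α*(P 0)^4*(P 2)^2 -
    2273764896*α*(P 0)^3*(P 1)^2*(P 2) - 8923138758*α*(P 0)^3*(P 2)^3 +
    5244566208*α*(P 0)^2*(P 1)^2*(P 2)^2 + 28052165955*α*(P 0)^2*(P 2)^4 -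
    32585105546*α*(P 0)*(P 2)^5 + 12276961160*α*(P 2)^6 + 3968676*β*δ*(P 0)^5*(P 1) -
    124259508*β*δ*(P 0)^4*(P 1)*(P 2) + 56307456*β*δ*(P 0)^3*(P 1)^3 +
    1489577544*β*δ*(P 0)^3*(P 1)*(P 2)^2 - 4795634880*β*δ*(P 0)^2*(P 1)*(P 2)^3 +
    3426348168*β*δ*(P 0)*(P 1)*(P 2)^4 + (7538103/4)*β*(P 0)^6 + (-118378989/2)*β*(P 0)^5*(P 2) +
    54978156*β*(P 0)^4*(P 1)^2 + (3245213565/4)*β*(P 0)^4*(P 2)^2 -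
    1453303728*β*(P 0)^3*(P 1)^2*(P 2) - 5703664671*β*(P 0)^3*(P 2)^3 +
    3352118112*β*(P 0)^2*(P 1)^2*(P 2)^2 + (35858918187/2)*β*(P 0)^2*(P 2)^4 -
    20826507097*β*(P 0)*(P 2)^5 + 7846714252*β*(P 2)^6 + 26054622*δ*(P 0)^5*(P 1) -
    803412054*δ*(P 0)^4*(P 1)*(P 2) + 365318208*δ*(P 0)^3*(P 1)^3 +
    9610675380*δ*(P 0)^3*(P 1)*(P 2)^2 - 30936857328*δ*(P 0)^2*(P 1)*(P 2)^3 +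
    22103539380*δ*(P 0)*(P 1)*(P 2)^4 + (19444131/2)*(P 0)^6 - 374569191*(P 0)^5*(P 2) +
    353406888*(P 0)^4*(P 1)^2 + (10453080645/2)*(P 0)^4*(P 2)^2 - 9375331104*(P 0)^3*(P 1)^2*(P 2) -
    36791087670*(P 0)^3*(P 2)^3 + 21623961792*(P 0)^2*(P 1)^2*(P 2)^2 +
    115662015483*(P 0)^2*(P 2)^4 - 134351829402*(P 0)*(P 2)^5 + 50619208392*(P 2)^6) * hQ +
    (3045144*α^5*β*(P 0)^2*(P 2)^6 - 6090288*α^5*β*(P 0)*(P 2)^7 + 3045144*α^5*β*(P 2)^8 +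
    111547236*α^5*(P 0)^2*(P 2)^6 - 223094472*α^5*(P 0)*(P 2)^7 + 111547236*α^5*(P 2)^8 -
    45677160*α^4*β*(P 0)^3*(P 2)^5 + 517425696*α^4*β*(P 0)^2*(P 2)^6 -
    897819912*α^4*β*(P 0)*(P 2)^7 + 426071376*α^4*β*(P 2)^8 - 1444822740*α^4*(P 0)^3*(P 2)^5 +
    8793745428*α^4*(P 0)^2*(P 2)^6 - 13253022636*α^4*(P 0)*(P 2)^7 + 5904099948*α^4*(P 2)^8 +
    280914534*α^3*β*(P 0)^4*(P 2)^4 - 5339071476*α^3*β*(P 0)^3*(P 2)^5 +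
    21587233536*α^3*β*(P 0)^2*(P 2)^6 - 28280910780*α^3*β*(P 0)*(P 2)^7 +
    11751834186*α^3*β*(P 2)^8 + 7481087181*α^3*(P 0)^4*(P 2)^4 - 73332397044*α^3*(P 0)^3*(P 2)^5 +
    236276762442*α^3*(P 0)^2*(P 2)^6 - 282480682476*α^3*(P 0)*(P 2)^7 + 112055229897*α^3*(P 2)^8 -
    904407768*α^2*β*(P 0)^5*(P 2)^3 + 22684829166*α^2*β*(P 0)^4*(P 2)^4 -
    142904372004*α^2*β*(P 0)^3*(P 2)^5 + 367880378688*α^2*β*(P 0)^2*(P 2)^6 -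
    393264919188*α^2*β*(P 0)*(P 2)^7 + 146508491106*α^2*β*(P 2)^8 + 227759040*α^2*(P 0)^6*(P 1)^2 -
    7468744320*α^2*(P 0)^5*(P 1)^2*(P 2) - 19563412572*α^2*(P 0)^5*(P 2)^3 +
    3308359680*α^2*(P 0)^4*(P 1)^4 + 93954392640*α^2*(P 0)^4*(P 1)^2*(P 2)^2 +
    260582316003*α^2*(P 0)^4*(P 2)^4 - 3308359680*α^2*(P 0)^3*(P 1)^4*(P 2) -
    365856877440*α^2*(P 0)^3*(P 1)^2*(P 2)^3 - 1326209160672*α^2*(P 0)^3*(P 2)^5 +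
    478586759040*α^2*(P 0)^2*(P 1)^2*(P 2)^4 + 3084865738974*α^2*(P 0)^2*(P 2)^6 -
    199443288960*α^2*(P 0)*(P 1)^2*(P 2)^5 - 3135616197084*α^2*(P 0)*(P 2)^7 +
    1135940715351*α^2*(P 2)^8 + 463807296*α*β*(P 0)^6*(P 1)^2 + 1603268316*α*β*(P 0)^6*(P 2)^2 -
    14885285760*α*β*(P 0)^5*(P 1)^2*(P 2) - 47627114508*α*β*(P 0)^5*(P 2)^3 +
    6563054592*α*β*(P 0)^4*(P 1)^4 + 187004462400*α*β*(P 0)^4*(P 1)^2*(P 2)^2 +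
    409594672404*α*β*(P 0)^4*(P 2)^4 - 6563054592*α*β*(P 0)^3*(P 1)^4*(P 2) -
    728141515776*α*β*(P 0)^3*(P 1)^2*(P 2)^3 - 1646932155336*α*β*(P 0)^3*(P 2)^5 +
    952491750912*α*β*(P 0)^2*(P 1)^2*(P 2)^4 + 3321749881908*α*β*(P 0)^2*(P 2)^6 -
    396933219072*α*β*(P 0)*(P 1)^2*(P 2)^5 - 3112566024780*α*β*(P 0)*(P 2)^7 +
    1074177471996*α*β*(P 2)^8 + 67942800*α*δ*(P 0)^7*(P 1) - 1878234480*α*δ*(P 0)^6*(P 1)*(P 2) +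
    1741875840*α*δ*(P 0)^5*(P 1)^3 + 24177722400*α*δ*(P 0)^5*(P 1)*(P 2)^2 -
    56717884800*α*δ*(P 0)^4*(P 1)^3*(P 2) - 199063719720*α*δ*(P 0)^4*(P 1)*(P 2)^3 -
    12130652160*α*δ*(P 0)^3*(P 1)^5 - 42131652480*α*δ*(P 0)^3*(P 1)^3*(P 2)^2 +
    851463106920*α*δ*(P 0)^3*(P 1)*(P 2)^4 + 828399720960*α*δ*(P 0)^2*(P 1)^3*(P 2)^3 -
    1650208351560*α*δ*(P 0)^2*(P 1)*(P 2)^5 - 731292059520*α*δ*(P 0)*(P 1)^3*(P 2)^4 +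
    1432187456520*α*δ*(P 0)*(P 1)*(P 2)^6 - 456745922880*α*δ*(P 1)*(P 2)^7 +
    (-82985715/4)*α*(P 0)^8 + 796848030*α*(P 0)^7*(P 2) + 3335736816*α*(P 0)^6*(P 1)^2 +
    12950341884*α*(P 0)^6*(P 2)^2 - 107885895840*α*(P 0)^5*(P 1)^2*(P 2) -
    324147928680*α*(P 0)^5*(P 2)^3 + 50400798912*α*(P 0)^4*(P 1)^4 +
    1440089931240*α*(P 0)^4*(P 1)^2*(P 2)^2 + (10384531317297/4)*α*(P 0)^4*(P 2)^4 +
    248148511488*α*(P 0)^3*(P 1)^4*(P 2) - 5306190147936*α*(P 0)^3*(P 1)^2*(P 2)^3 -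
    10222938472617*α*(P 0)^3*(P 2)^5 - 715463232000*α*(P 0)^2*(P 1)^4*(P 2)^2 +
    4957632465432*α*(P 0)^2*(P 1)^2*(P 2)^4 + (41497111182105/2)*α*(P 0)^2*(P 2)^6 +
    687752960848*α*(P 0)*(P 1)^2*(P 2)^5 - 19675201454235*α*(P 0)*(P 2)^7 -
    1674735050560*α*(P 1)^2*(P 2)^6 + 6863872991670*α*(P 2)^8 + 47559960*β*δ*(P 0)^7*(P 1) -
    1740313512*β*δ*(P 0)^6*(P 1)*(P 2) + 1711984896*β*δ*(P 0)^5*(P 1)^3 +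
    23210148888*β*δ*(P 0)^5*(P 1)*(P 2)^2 - 82489295808*β*δ*(P 0)^4*(P 1)^3*(P 2) -
    283946426316*β*δ*(P 0)^4*(P 1)*(P 2)^3 - 37187693568*β*δ*(P 0)^3*(P 1)^5 -
    428665274496*β*δ*(P 0)^3*(P 1)^3*(P 2)^2 + 1488678452892*β*δ*(P 0)^3*(P 1)*(P 2)^4 +
    2755989434880*β*δ*(P 0)^2*(P 1)^3*(P 2)^3 - 3118958296284*β*δ*(P 0)^2*(P 1)*(P 2)^5 -
    2246546849472*β*δ*(P 0)*(P 1)^3*(P 2)^4 + 2801725156068*β*δ*(P 0)*(P 1)*(P 2)^6 -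
    909016281696*β*δ*(P 1)*(P 2)^7 - 62602875*β*(P 0)^8 + 942436620*β*(P 0)^7*(P 2) +
    2322776736*β*(P 0)^6*(P 1)^2 + 9116050716*β*(P 0)^6*(P 2)^2 -
    73622623680*β*(P 0)^5*(P 1)^2*(P 2) - 195911368632*β*(P 0)^5*(P 2)^3 +
    40982858496*β*(P 0)^4*(P 1)^4 + 1260578862432*β*(P 0)^4*(P 1)^2*(P 2)^2 +
    1442927360349*β*(P 0)^4*(P 2)^4 + 876072296448*β*(P 0)^3*(P 1)^4*(P 2) -
    3952552420224*β*(P 0)^3*(P 1)^2*(P 2)^3 - 5721540017400*β*(P 0)^3*(P 2)^5 -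
    2197869047808*β*(P 0)^2*(P 1)^4*(P 2)^2 - 1090704626112*β*(P 0)^2*(P 1)^2*(P 2)^4 +
    12187472222142*β*(P 0)^2*(P 2)^6 + 8998796557824*β*(P 0)*(P 1)^2*(P 2)^5 -
    12063269527956*β*(P 0)*(P 2)^7 - 5144818526976*β*(P 1)^2*(P 2)^6 + 4340325447036*β*(P 2)^8 +
    108708480*δ*(P 0)^7*(P 1) - 1893362688*δ*(P 0)^6*(P 1)*(P 2) + 2900624256*δ*(P 0)^5*(P 1)^3 +
    22340241936*δ*(P 0)^5*(P 1)*(P 2)^2 - 424669478400*δ*(P 0)^4*(P 1)^3*(P 2) -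
    1341553850928*δ*(P 0)^4*(P 1)*(P 2)^3 - 321950251008*δ*(P 0)^3*(P 1)^5 -
    4662121094784*δ*(P 0)^3*(P 1)^3*(P 2)^2 + 9188467760880*δ*(P 0)^3*(P 1)*(P 2)^4 +
    24562467159552*δ*(P 0)^2*(P 1)^3*(P 2)^3 - 20753640068496*δ*(P 0)^2*(P 1)*(P 2)^5 -
    19478577210624*δ*(P 0)*(P 1)^3*(P 2)^4 + 19206990265152*δ*(P 0)*(P 1)*(P 2)^6 -
    6320819694336*δ*(P 1)*(P 2)^7 + (-2279026773/4)*(P 0)^8 + 4698587250*(P 0)^7*(P 2) +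
    8195410224*(P 0)^6*(P 1)^2 + 32813898174*(P 0)^6*(P 2)^2 - 269728519968*(P 0)^5*(P 1)^2*(P 2) -
    853720150464*(P 0)^5*(P 2)^3 + 200542236480*(P 0)^4*(P 1)^4 +
    6713288110584*(P 0)^4*(P 1)^2*(P 2)^2 + (28611947992527/4)*(P 0)^4*(P 2)^4 +
    7750297343232*(P 0)^3*(P 1)^4*(P 2) - 17946228445344*(P 0)^3*(P 1)^2*(P 2)^3 -
    31753816241967*(P 0)^3*(P 2)^5 - 19056447727104*(P 0)^2*(P 1)^4*(P 2)^2 -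
    31258743027288*(P 0)^2*(P 1)^2*(P 2)^4 + (145014071842491/2)*(P 0)^2*(P 2)^6 +
    87361135396784*(P 0)*(P 1)^2*(P 2)^5 - 74321185803045*(P 0)*(P 2)^7 -
    44607918924992*(P 1)^2*(P 2)^6 + 27231756547368*(P 2)^8) * α_sq +
    (18270864*α^6*(P 0)^2*(P 2)^6 - 36541728*α^6*(P 0)*(P 2)^7 + 18270864*α^6*(P 2)^8 +
    45677160*α^5*β*(P 0)^2*(P 2)^6 - 91354320*α^5*β*(P 0)*(P 2)^7 + 45677160*α^5*β*(P 2)^8 -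
    228385800*α^5*(P 0)^3*(P 2)^5 + 1459400196*α^5*(P 0)^2*(P 2)^6 - 2233642992*α^5*(P 0)*(P 2)^7 +
    1002628596*α^5*(P 2)^8 + 60902880*α^4*β^2*(P 0)^2*(P 2)^6 - 121805760*α^4*β^2*(P 0)*(P 2)^7 +
    60902880*α^4*β^2*(P 2)^8 - 456771600*α^4*β*(P 0)^3*(P 2)^5 + 2373968400*α^4*β*(P 0)^2*(P 2)^6 -
    3377622000*α^4*β*(P 0)*(P 2)^7 + 1460425200*α^4*β*(P 2)^8 + 1123658136*α^4*(P 0)^4*(P 2)^4 -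
    11664475344*α^4*(P 0)^3*(P 2)^5 + 36693175896*α^4*(P 0)^2*(P 2)^6 -
    42887558304*α^4*(P 0)*(P 2)^7 + 16735199616*α^4*(P 2)^8 + 45677160*α^3*β^3*(P 0)^2*(P 2)^6 -
    91354320*α^3*β^3*(P 0)*(P 2)^7 + 45677160*α^3*β^3*(P 2)^8 - 456771600*α^3*β^2*(P 0)^3*(P 2)^5 +
    2198872620*α^3*β^2*(P 0)^2*(P 2)^6 - 3027430440*α^3*β^2*(P 0)*(P 2)^7 +
    1285329420*α^3*β^2*(P 2)^8 + 1685487204*α^3*β*(P 0)^4*(P 2)^4 -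
    14170138416*α^3*β*(P 0)^3*(P 2)^5 + 39343697304*α^3*β*(P 0)^2*(P 2)^6 -
    42918928176*α^3*β*(P 0)*(P 2)^7 + 16059882084*α^3*β*(P 2)^8 + 45551808*α^3*(P 0)^6*(P 1)^2 -
    1493748864*α^3*(P 0)^5*(P 1)^2*(P 2) - 2713223304*α^3*(P 0)^5*(P 2)^3 +
    661671936*α^3*(P 0)^4*(P 1)^4 + 18790878528*α^3*(P 0)^4*(P 1)^2*(P 2)^2 +
    38374201278*α^3*(P 0)^4*(P 2)^4 - 661671936*α^3*(P 0)^3*(P 1)^4*(P 2) -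
    73171375488*α^3*(P 0)^3*(P 1)^2*(P 2)^3 - 185387588172*α^3*(P 0)^3*(P 2)^5 +
    95717351808*α^3*(P 0)^2*(P 1)^2*(P 2)^4 + 396922293948*α^3*(P 0)^2*(P 2)^6 -
    39888657792*α^3*(P 0)*(P 1)^2*(P 2)^5 - 377612511972*α^3*(P 0)*(P 2)^7 +
    130416828222*α^3*(P 2)^8 + 18270864*α^2*β^4*(P 0)^2*(P 2)^6 - 36541728*α^2*β^4*(P 0)*(P 2)^7 +
    18270864*α^2*β^4*(P 2)^8 - 228385800*α^2*β^3*(P 0)^3*(P 2)^5 +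
    1101595776*α^2*β^3*(P 0)^2*(P 2)^6 - 1518034152*α^2*β^3*(P 0)*(P 2)^7 +
    644824176*α^2*β^3*(P 2)^8 + 1123658136*α^2*β^2*(P 0)^4*(P 2)^4 -
    9038038644*α^2*β^2*(P 0)^3*(P 2)^5 + 24117139140*α^2*β^2*(P 0)^2*(P 2)^6 -
    25614794892*α^2*β^2*(P 0)*(P 2)^7 + 9412036260*α^2*β^2*(P 2)^8 -
    2713223304*α^2*β*(P 0)^5*(P 2)^3 + 32755910598*α^2*β*(P 0)^4*(P 2)^4 -
    141633282852*α^2*β*(P 0)^3*(P 2)^5 + 277613318664*α^2*β*(P 0)^2*(P 2)^6 -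
    247784314644*α^2*β*(P 0)*(P 2)^7 + 81761591538*α^2*β*(P 2)^8 + 13588560*α^2*δ*(P 0)^7*(P 1) -
    375646896*α^2*δ*(P 0)^6*(P 1)*(P 2) + 348375168*α^2*δ*(P 0)^5*(P 1)^3 +
    4835544480*α^2*δ*(P 0)^5*(P 1)*(P 2)^2 - 11343576960*α^2*δ*(P 0)^4*(P 1)^3*(P 2) -
    39812743944*α^2*δ*(P 0)^4*(P 1)*(P 2)^3 - 2426130432*α^2*δ*(P 0)^3*(P 1)^5 -
    8426330496*α^2*δ*(P 0)^3*(P 1)^3*(P 2)^2 + 170292621384*α^2*δ*(P 0)^3*(P 1)*(P 2)^4 +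
    165679944192*α^2*δ*(P 0)^2*(P 1)^3*(P 2)^3 - 330041670312*α^2*δ*(P 0)^2*(P 1)*(P 2)^5 -
    146258411904*α^2*δ*(P 0)*(P 1)^3*(P 2)^4 + 286437491304*α^2*δ*(P 0)*(P 1)*(P 2)^6 -
    91349184576*α^2*δ*(P 1)*(P 2)^7 + (-16597143/4)*α^2*(P 0)^8 + 159369606*α^2*(P 0)^7*(P 2) +
    262766592*α^2*(P 0)^6*(P 1)^2 + 463754322*α^2*(P 0)^6*(P 2)^2 -
    8543418624*α^2*(P 0)^5*(P 1)^2*(P 2) - 32134661172*α^2*(P 0)^5*(P 2)^3 +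
    4328095680*α^2*(P 0)^4*(P 1)^4 + 124230825144*α^2*(P 0)^4*(P 1)^2*(P 2)^2 +
    (998560750689/4)*α^2*(P 0)^4*(P 2)^4 + 55381766400*α^2*(P 0)^3*(P 1)^4*(P 2) -
    423489061440*α^2*(P 0)^3*(P 1)^2*(P 2)^3 - 852078799269*α^2*(P 0)^3*(P 2)^5 -
    143092646400*α^2*(P 0)^2*(P 1)^4*(P 2)^2 + 157276901784*α^2*(P 0)^2*(P 1)^2*(P 2)^4 +
    (3004050959373/2)*α^2*(P 0)^2*(P 2)^6 + 485208996656*α^2*(P 0)*(P 1)^2*(P 2)^5 -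
    1289566925283*α^2*(P 0)*(P 2)^7 - 334947010112*α^2*(P 1)^2*(P 2)^6 + 421495743723*α^2*(P 2)^8 +
    3045144*α*β^5*(P 0)^2*(P 2)^6 - 6090288*α*β^5*(P 0)*(P 2)^7 + 3045144*α*β^5*(P 2)^8 -
    45677160*α*β^4*(P 0)^3*(P 2)^5 + 250975596*α*β^4*(P 0)^2*(P 2)^6 -
    364919712*α*β^4*(P 0)*(P 2)^7 + 159621276*α*β^4*(P 2)^8 + 280914534*α*β^3*(P 0)^4*(P 2)^4 -
    2598441876*α*β^3*(P 0)^3*(P 2)^5 + 7280228592*α*β^3*(P 0)^2*(P 2)^6 -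
    7888789692*α*β^3*(P 0)*(P 2)^7 + 2926088442*α*β^3*(P 2)^8 - 904407768*α*β^2*(P 0)^5*(P 2)^3 +
    12150534141*α*β^2*(P 0)^4*(P 2)^4 - 53447359644*α*β^2*(P 0)^3*(P 2)^5 +
    103284395442*α*β^2*(P 0)^2*(P 2)^6 - 90306809676*α*β^2*(P 0)*(P 2)^7 +
    29223647505*α*β^2*(P 2)^8 + 1603268316*α*β*(P 0)^6*(P 2)^2 - 29538959148*α*β*(P 0)^5*(P 2)^3 +
    189117612216*α*β*(P 0)^4*(P 2)^4 - 569187532944*α*β*(P 0)^3*(P 2)^5 +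
    879734017644*α*β*(P 0)^2*(P 2)^6 - 670300699476*α*β*(P 0)*(P 2)^7 + 198572293392*α*β*(P 2)^8 +
    382019328*α*δ*(P 0)^6*(P 1)*(P 2) - 182207232*α*δ*(P 0)^5*(P 1)^3 -
    5641278048*α*δ*(P 0)^5*(P 1)*(P 2)^2 - 25275255552*α*δ*(P 0)^4*(P 1)^3*(P 2) -
    66032206128*α*δ*(P 0)^4*(P 1)*(P 2)^3 - 26451910656*α*δ*(P 0)^3*(P 1)^5 -
    414110967552*α*δ*(P 0)^3*(P 1)^3*(P 2)^2 + 619094515536*α*δ*(P 0)^3*(P 1)*(P 2)^4 +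
    2039822152704*α*δ*(P 0)^2*(P 1)^3*(P 2)^3 - 1487428865808*α*δ*(P 0)^2*(P 1)*(P 2)^5 -
    1600253722368*α*δ*(P 0)*(P 1)^3*(P 2)^4 + 1407617283792*α*δ*(P 0)*(P 1)*(P 2)^6 -
    467991468672*α*δ*(P 1)*(P 2)^7 + (-108608607/2)*α*(P 0)^8 + 434434428*α*(P 0)^7*(P 2) -
    1088072352*α*(P 0)^6*(P 1)^2 + 7122330486*α*(P 0)^6*(P 2)^2 +
    31276228032*α*(P 0)^5*(P 1)^2*(P 2) - 85056385068*α*(P 0)^5*(P 2)^3 -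
    6137797248*α*(P 0)^4*(P 1)^4 - 91011180528*α*(P 0)^4*(P 1)^2*(P 2)^2 +
    (641517497937/2)*α*(P 0)^4*(P 2)^4 + 659355793920*α*(P 0)^3*(P 1)^4*(P 2) +
    1008183051648*α*(P 0)^3*(P 1)^2*(P 2)^3 - 703426016358*α*(P 0)^3*(P 2)^5 -
    1565604467712*α*(P 0)^2*(P 1)^4*(P 2)^2 - 5823244588176*α*(P 0)^2*(P 1)^2*(P 2)^4 +
    1147143473499*α*(P 0)^2*(P 2)^6 + 8540635884128*α*(P 0)*(P 1)^2*(P 2)^5 -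
    1087102557942*α*(P 0)*(P 2)^7 - 3664751322752*α*(P 1)^2*(P 2)^6 + 400180276290*α*(P 2)^8 +
    12580056*β^5*(P 0)^2*(P 2)^6 - 25160112*β^5*(P 0)*(P 2)^7 + 12580056*β^5*(P 2)^8 -
    188700840*β^4*(P 0)^3*(P 2)^5 + 724800444*β^4*(P 0)^2*(P 2)^6 - 883498368*β^4*(P 0)*(P 2)^7 +
    347398764*β^4*(P 2)^8 + 1160510166*β^3*(P 0)^4*(P 2)^4 - 6833808684*β^3*(P 0)^3*(P 2)^5 +
    14490552600*β^3*(P 0)^2*(P 2)^6 - 13121719812*β^3*(P 0)*(P 2)^7 + 4304465730*β^3*(P 2)^8 -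
    3736276632*β^2*(P 0)^5*(P 2)^3 + 31000246317*β^2*(P 0)^4*(P 2)^4 -
    98729264088*β^2*(P 0)^3*(P 2)^5 + 152381602026*β^2*(P 0)^2*(P 2)^6 -
    113895013896*β^2*(P 0)*(P 2)^7 + 32978706273*β^2*(P 2)^8 + 6623399484*β*(P 0)^6*(P 2)^2 -
    75664850436*β*(P 0)^5*(P 2)^3 + 341014324374*β*(P 0)^4*(P 2)^4 -
    800273557836*β*(P 0)^3*(P 2)^5 + 1033881230388*β*(P 0)^2*(P 2)^6 -
    692415229488*β*(P 0)*(P 2)^7 + 186834683514*β*(P 2)^8 - 231005520*δ*(P 0)^7*(P 1) +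
    7966889136*δ*(P 0)^6*(P 1)*(P 2) - 6684363648*δ*(P 0)^5*(P 1)^3 -
    105478578432*δ*(P 0)^5*(P 1)*(P 2)^2 + 88538444928*δ*(P 0)^4*(P 1)^3*(P 2) +
    404568719064*δ*(P 0)^4*(P 1)*(P 2)^3 - 67568947200*δ*(P 0)^3*(P 1)^5 -
    1564096466304*δ*(P 0)^3*(P 1)^3*(P 2)^2 - 342383088888*δ*(P 0)^3*(P 1)*(P 2)^4 +
    5593860186624*δ*(P 0)^2*(P 1)^3*(P 2)^3 - 522116362344*δ*(P 0)^2*(P 1)*(P 2)^5 -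
    4111617801600*δ*(P 0)*(P 1)^3*(P 2)^4 + 934315711080*δ*(P 0)*(P 1)*(P 2)^6 -
    376642284096*δ*(P 1)*(P 2)^7 + (-610586343/4)*(P 0)^8 - 923807754*(P 0)^7*(P 2) -
    5762179296*(P 0)^6*(P 1)^2 + 21469737204*(P 0)^6*(P 2)^2 + 169515643968*(P 0)^5*(P 1)^2*(P 2) +
    5431279392*(P 0)^5*(P 2)^3 - 52459997760*(P 0)^4*(P 1)^4 -
    1170050709096*(P 0)^4*(P 1)^2*(P 2)^2 + (-2225310457383/4)*(P 0)^4*(P 2)^4 +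
    1730450684160*(P 0)^3*(P 1)^4*(P 2) + 6227367607872*(P 0)^3*(P 1)^2*(P 2)^3 +
    1689592694715*(P 0)^3*(P 2)^5 - 4022541734400*(P 0)^2*(P 1)^4*(P 2)^2 -
    19974498217128*(P 0)^2*(P 1)^2*(P 2)^4 + (-3876709909767/2)*(P 0)^2*(P 2)^6 +
    24169484956080*(P 0)*(P 1)^2*(P 2)^5 + 884955289785*(P 0)*(P 2)^7 -
    9416057102400*(P 1)^2*(P 2)^6 - 105689977527*(P 2)^8) * β_sq +
    (45551808*α^2*β^2*(P 0)^6*(P 1)^2 - 1493748864*α^2*β^2*(P 0)^5*(P 1)^2*(P 2) +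
    661671936*α^2*β^2*(P 0)^4*(P 1)^4 + 18790878528*α^2*β^2*(P 0)^4*(P 1)^2*(P 2)^2 -
    661671936*α^2*β^2*(P 0)^3*(P 1)^4*(P 2) - 73171375488*α^2*β^2*(P 0)^3*(P 1)^2*(P 2)^3 +
    95717351808*α^2*β^2*(P 0)^2*(P 1)^2*(P 2)^4 - 39888657792*α^2*β^2*(P 0)*(P 1)^2*(P 2)^5 +
    463807296*α^2*β*(P 0)^6*(P 1)^2 - 14885285760*α^2*β*(P 0)^5*(P 1)^2*(P 2) +
    6563054592*α^2*β*(P 0)^4*(P 1)^4 + 187004462400*α^2*β*(P 0)^4*(P 1)^2*(P 2)^2 -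
    6563054592*α^2*β*(P 0)^3*(P 1)^4*(P 2) - 728141515776*α^2*β*(P 0)^3*(P 1)^2*(P 2)^3 +
    952491750912*α^2*β*(P 0)^2*(P 1)^2*(P 2)^4 - 396933219072*α^2*β*(P 0)*(P 1)^2*(P 2)^5 +
    1065315888*α^2*(P 0)^6*(P 1)^2 - 33800076576*α^2*(P 0)^5*(P 1)^2*(P 2) +
    14865209856*α^2*(P 0)^4*(P 1)^4 + 424327356432*α^2*(P 0)^4*(P 1)^2*(P 2)^2 -
    14865209856*α^2*(P 0)^3*(P 1)^4*(P 2) - 1652145955488*α^2*(P 0)^3*(P 1)^2*(P 2)^3 +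
    2161183568544*α^2*(P 0)^2*(P 1)^2*(P 2)^4 - 900630208800*α^2*(P 0)*(P 1)^2*(P 2)^5 +
    236048256*α*β^2*(P 0)^6*(P 1)^2 - 7648701696*α*β^2*(P 0)^5*(P 1)^2*(P 2) +
    3364429824*α*β^2*(P 0)^4*(P 1)^4 + 96255057024*α*β^2*(P 0)^4*(P 1)^2*(P 2)^2 -
    3364429824*α*β^2*(P 0)^3*(P 1)^4*(P 2) - 374861571840*α*β^2*(P 0)^3*(P 1)^2*(P 2)^3 +
    490372538112*α*β^2*(P 0)^2*(P 1)^2*(P 2)^4 - 204353369856*α*β^2*(P 0)*(P 1)^2*(P 2)^5 +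
    3109995648*α*β*(P 0)^6*(P 1)^2 - 100142002944*α*β*(P 0)^5*(P 1)^2*(P 2) +
    44144732160*α*β*(P 0)^4*(P 1)^4 + 1258659340416*α*β*(P 0)^4*(P 1)^2*(P 2)^2 -
    44144732160*α*β*(P 0)^3*(P 1)^4*(P 2) - 4901080780800*α*β*(P 0)^3*(P 1)^2*(P 2)^3 +
    6411201573888*α*β*(P 0)^2*(P 1)^2*(P 2)^4 - 2671748126208*α*β*(P 0)*(P 1)^2*(P 2)^5 +
    10312507872*α*(P 0)^6*(P 1)^2 - 327665113920*α*(P 0)^5*(P 1)^2*(P 2) +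
    144193913856*α*(P 0)^4*(P 1)^4 + 4113676246176*α*(P 0)^4*(P 1)^2*(P 2)^2 -
    144193913856*α*(P 0)^3*(P 1)^4*(P 2) - 16016798675520*α*(P 0)^3*(P 1)^2*(P 2)^3 +
    20951666528832*α*(P 0)^2*(P 1)^2*(P 2)^4 - 8731191493440*α*(P 0)*(P 1)^2*(P 2)^5 +
    190496448*β^2*(P 0)^6*(P 1)^2 - 6154952832*β^2*(P 0)^5*(P 1)^2*(P 2) +
    2702757888*β^2*(P 0)^4*(P 1)^4 + 77464178496*β^2*(P 0)^4*(P 1)^2*(P 2)^2 -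
    2702757888*β^2*(P 0)^3*(P 1)^4*(P 2) - 301690196352*β^2*(P 0)^3*(P 1)^2*(P 2)^3 +
    394655186304*β^2*(P 0)^2*(P 1)^2*(P 2)^4 - 164464712064*β^2*(P 0)*(P 1)^2*(P 2)^5 +
    4965302592*β*(P 0)^6*(P 1)^2 - 159835980672*β*(P 0)^5*(P 1)^2*(P 2) +
    70239052800*β*(P 0)^4*(P 1)^4 + 2010427677504*β*(P 0)^4*(P 1)^2*(P 2)^2 -
    70239052800*β*(P 0)^3*(P 1)^4*(P 2) - 7829240398848*β*(P 0)^3*(P 1)^2*(P 2)^3 +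
    10241715174912*β*(P 0)^2*(P 1)^2*(P 2)^4 - 4268031775488*β*(P 0)*(P 1)^2*(P 2)^5 +
    24387126192*(P 0)^6*(P 1)^2 - 776380808736*(P 0)^5*(P 1)^2*(P 2) +
    341937842688*(P 0)^4*(P 1)^4 + 9747585838224*(P 0)^4*(P 1)^2*(P 2)^2 -
    341937842688*(P 0)^3*(P 1)^4*(P 2) - 37952490614688*(P 0)^3*(P 1)^2*(P 2)^3 +
    49645811318688*(P 0)^2*(P 1)^2*(P 2)^4 - 20688912859680*(P 0)*(P 1)^2*(P 2)^5) * δ_sq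

theorem eval_F_eq_zero_iff (hQ : eval P Qpoly = 0) :
    eval P F = 0 ↔
      lineThroughP1 ptP2 P = 0 ∨ lineThroughP1 ptP3 P = 0 ∨ lineThroughP1 ptP4 P = 0 := by
  simp [eval_F_of_eval_Qpoly_eq_zero hQ, κ_ne_zero, or_assoc]

theorem conic_tangent_at_ptP2 (hQ : eval P Qpoly = 0) (h : lineThroughP1 ptP2 P = 0) :
    P 1 * ptP2 2 = ptP2 1 * P 2 := by
  rw [eval_Qpoly] at hQ
  simp only [lineThroughP1, ptP2, Matrix.cons_val] at h ⊢
  have hsq : (176*α*β + 1568*α + 1200*β + 5920) * (2 * P 1 - δ * P 2) ^ 2 = 0 := by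
    linear_combination 4 * hQ + (32*α*β*δ*(P 1) - 6*α*β*(P 0) - 42*α*β*(P 2) + 112*α*δ*(P 1) -
      60*α*(P 0) - 236*α*(P 2) + 32*β*δ*(P 1) - 54*β*(P 0) - 122*β*(P 2) + 624*δ*(P 1) - 156*(P 0) -
      1100*(P 2)) * h + (128*β*δ*(P 1)*(P 2) - 24*β*(P 0)*(P 2) + 8*β*(P 2)^2 + 1088*δ*(P 1)*(P 2) -
      360*(P 0)*(P 2) - 216*(P 2)^2) * α_sq + (128*α*δ*(P 1)*(P 2) - 24*α*(P 0)*(P 2) -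
      168*α*(P 2)^2 + 128*δ*(P 1)*(P 2) - 216*(P 0)*(P 2) - 488*(P 2)^2) * β_sq + (176*α*β*(P 2)^2 +
      1568*α*(P 2)^2 + 1200*β*(P 2)^2 + 5920*(P 2)^2) * δ_sq
  have hv := pow_eq_zero_iff two_ne_zero |>.1
    ((mul_eq_zero.1 hsq).resolve_left Qpoly_coeff_y_sq_ne_zero)
  linear_combination 3 * hv

theorem conic_tangent_at_ptP3 (hQ : eval P Qpoly = 0) (h : lineThroughP1 ptP3 P = 0) :
    P 1 * ptP3 2 = ptP3 1 * P 2 := by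
  rw [eval_Qpoly] at hQ
  simp only [lineThroughP1, ptP3, Matrix.cons_val] at h ⊢
  have hsq : (176*α*β + 1568*α + 1200*β + 5920) * P 1 ^ 2 = 0 := by
    linear_combination hQ + (48*α*β*δ*(P 1) - 9*α*β*(P 0) + 57*α*β*(P 2) + 168*α*δ*(P 1) -
      90*α*(P 0) + 258*α*(P 2) + 48*β*δ*(P 1) - 81*β*(P 0) + 129*β*(P 2) + 936*δ*(P 1) - 234*(P 0) +
      1170*(P 2)) * h
  have hv := pow_eq_zero_iff two_ne_zero |>.1
    ((mul_eq_zero.1 hsq).resolve_left Qpoly_coeff_y_sq_ne_zero)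
  linear_combination hv

theorem conic_secant_ptP4_ptP5 (hQ : eval P Qpoly = 0) (h : lineThroughP1 ptP4 P = 0) :
    P 1 * ptP4 2 = ptP4 1 * P 2 ∨ P 1 * ptP5 2 = ptP5 1 * P 2 := by
  rw [eval_Qpoly] at hQ
  simp only [lineThroughP1, ptP4, ptP5, Matrix.cons_val] at h ⊢
  have hsq : (176*α*β + 1568*α + 1200*β + 5920) *
      ((4 * P 1 - (δ + 2) * P 2) * (4 * P 1 - (δ - 2) * P 2)) = 0 := by
    linear_combination 16 * hQ + (64*α*β*δ*(P 1) - 12*α*β*(P 0) - 4*α*β*(P 2) + 224*α*δ*(P 1) -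
      120*α*(P 0) - 64*α*(P 2) + 64*β*δ*(P 1) - 108*β*(P 0) - 36*β*(P 2) + 1248*δ*(P 1) -
      312*(P 0) - 320*(P 2)) * h + (256*β*δ*(P 1)*(P 2) - 48*β*(P 0)*(P 2) + 160*β*(P 2)^2 +
      2176*δ*(P 1)*(P 2) - 720*(P 0)*(P 2) + 1232*(P 2)^2) * α_sq + (256*α*δ*(P 1)*(P 2) -
      48*α*(P 0)*(P 2) - 16*α*(P 2)^2 + 256*δ*(P 1)*(P 2) - 432*(P 0)*(P 2) - 144*(P 2)^2) * β_sq +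
      (176*α*β*(P 2)^2 + 1568*α*(P 2)^2 + 1200*β*(P 2)^2 + 5920*(P 2)^2) * δ_sq
  rcases mul_eq_zero.1 ((mul_eq_zero.1 hsq).resolve_left Qpoly_coeff_y_sq_ne_zero) with hv | hv
  · exact .inl (by linear_combination 3 * hv)
  · exact .inr (by linear_combination 3 * hv)

end

theorem eval_Qpoly_ptP2 : eval ptP2 Qpoly = 0 := by
  simp only [eval_Qpoly, ptP2, Matrix.cons_val]
  linear_combination (-432*α*β - 2016*α - 432*β - 14112) * α_sq + (-288*α^2 + 144*α*β - 288*α +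
    1296*β + 2304) * β_sq + (-576*α^2*β - 2016*α^2 - 576*α*β^2 - 1584*α*β + 864*α - 576*β^2 -
    1008*β + 42048) * δ_sq

theorem eval_Qpoly_ptP3 : eval ptP3 Qpoly = 0 := by
  simp only [eval_Qpoly, ptP3, Matrix.cons_val]
  ring

theorem eval_Qpoly_ptP4 : eval ptP4 Qpoly = 0 := by
  simp only [eval_Qpoly, ptP4, Matrix.cons_val]
  linear_combination (-432*α*β - 2016*α - 1152*β*δ - 1584*β - 9792*δ - 23904) * α_sq + (-288*α^2 +
    144*α*β - 1152*α*δ - 1440*α + 1296*β - 1152*δ + 1152) * β_sq + (-576*α^2*β - 2016*α^2 -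
    576*α*β^2 - 1584*α*β + 864*α - 576*β^2 - 1008*β + 42048) * δ_sq

theorem eval_Qpoly_ptP5 : eval ptP5 Qpoly = 0 := by
  simp only [eval_Qpoly, ptP5, Matrix.cons_val]
  linear_combination (-432*α*β - 2016*α + 1152*β*δ - 1584*β + 9792*δ - 23904) * α_sq + (-288*α^2 +
    144*α*β + 1152*α*δ - 1440*α + 1296*β + 1152*δ + 1152) * β_sq + (-576*α^2*β - 2016*α^2 -
    576*α*β^2 - 1584*α*β + 864*α - 576*β^2 - 1008*β + 42048) * δ_sq

/-- the common zeros of `F` and `Q` in `ℙ²(ℂ)` are exactly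
`{p2, p3, p4, p5}`. -/
theorem werner_octic_meets_conic_exactly :
    (eval ptP2 F = 0 ∧ eval ptP2 Qpoly = 0) ∧
    (eval ptP3 F = 0 ∧ eval ptP3 Qpoly = 0) ∧
    (eval ptP4 F = 0 ∧ eval ptP4 Qpoly = 0) ∧
    (eval ptP5 F = 0 ∧ eval ptP5 Qpoly = 0) ∧
    (∀ P : Fin 3 → ℂ, P ≠ 0 → eval P F = 0 → eval P Qpoly = 0 →
      ∃ t : ℂ, t ≠ 0 ∧
        (P = t • ptP2 ∨ P = t • ptP3 ∨ P = t • ptP4 ∨ P = t • ptP5)) := by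
  refine ⟨⟨(eval_F_eq_zero_iff eval_Qpoly_ptP2).2 (.inl (lineThroughP1_self _)), eval_Qpoly_ptP2⟩,
    ⟨(eval_F_eq_zero_iff eval_Qpoly_ptP3).2 (.inr (.inl (lineThroughP1_self _))), eval_Qpoly_ptP3⟩,
    ⟨(eval_F_eq_zero_iff eval_Qpoly_ptP4).2 (.inr (.inr (lineThroughP1_self _))), eval_Qpoly_ptP4⟩,
    ⟨(eval_F_eq_zero_iff eval_Qpoly_ptP5).2
      (.inr (.inr (lineThroughP1_ptP5 ▸ lineThroughP1_self _))), eval_Qpoly_ptP5⟩, ?_⟩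
  intro P hP hF hQ
  have h6 : (6 : ℂ) ≠ 0 := by norm_num
  have h12 : (12 : ℂ) ≠ 0 := by norm_num
  rcases (eval_F_eq_zero_iff hQ).1 hF with h | h | h
  · obtain ⟨t, ht, rfl⟩ :=
      exists_ne_zero_eq_smul_of_lineThroughP1 h6 hP h (conic_tangent_at_ptP2 hQ h)
    exact ⟨t, ht, .inl rfl⟩
  · obtain ⟨t, ht, rfl⟩ :=
      exists_ne_zero_eq_smul_of_lineThroughP1 one_ne_zero hP h (conic_tangent_at_ptP3 hQ h)
    exact ⟨t, ht, .inr (.inl rfl)⟩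
  · rcases conic_secant_ptP4_ptP5 hQ h with h' | h'
    · obtain ⟨t, ht, rfl⟩ := exists_ne_zero_eq_smul_of_lineThroughP1 h12 hP h h'
      exact ⟨t, ht, .inr (.inr (.inl rfl))⟩
    · obtain ⟨t, ht, rfl⟩ :=
        exists_ne_zero_eq_smul_of_lineThroughP1 h12 hP (lineThroughP1_ptP5 ▸ h) h'
      exact ⟨t, ht, .inr (.inr (.inr rfl))⟩
end
end

section
/- (Ordinary quadruple point at p and infinitely near triple point at p1.) (a) Every monomial occurring in F has degree at most 4 in x, and the coefficient of x^4 in F, which is a binary quartic form f₄(y,z) ∈ ℂ[y,z], is nonzero and squarefree (equivalently, f₄ has four distinct roots in ℙ¹(ℂ)); hence the curve {F = 0} has an ordinary point of multiplicity 4 at p = [1:0:0]. (b) Every monomial occurring in F has combined degree at least 3 in the variables x and z, and the sum of the terms of F whose combined degree in x and z equals 3 is c·x³y⁵ for some nonzero constant c ∈ ℂ (namely c = 24·14182182144·αβδ + 144·15251365120·αδ + 24·58496365824·βδ + 48·188641373952·δ); hence {F = 0} has a point of multiplicity 3 at p1 = [0:1:0] whose tangent cone is the triple line x = 0, i.e.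 all three tangent directions at p1 coincide. -/
noncomputable section

open MvPolynomial

/-- The coefficient of `x³y⁵` in `F`, i.e. the sum of the terms of `F` of combined
degree 3 in `x` and `z` is `cTriple · x³y⁵`. -/
def cTriple : ℂ :=
  24*14182182144*(α*β*δ) + 144*15251365120*(α*δ) + 24*58496365824*(β*δ)
    + 48*188641373952*δ

namespace Werner
set_option maxHeartbeats 4000000
set_option maxRecDepth 8000
abbrev R2 : Type := MvPolynomial (Fin 2) ℂ


lemma mem_supp_add {f g : R3} {P : (Fin 3 →₀ ℕ) → Prop}
    (hf : ∀ m ∈ f.support, P m) (hg : ∀ m ∈ g.support, P m) :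
    ∀ m ∈ (f + g).support, P m := by
  intro m hm
  rcases Finset.mem_union.mp (support_add hm) with h | h
  exacts [hf m h, hg m h]

lemma supp_Cmul {c : ℂ} {f : R3} {P : (Fin 3 →₀ ℕ) → Prop}
    (hf : ∀ m ∈ f.support, P m) :
    ∀ m ∈ (C c * f).support, P m := by
  intro m hm
  apply hf
  rw [mem_support_iff] at hm ⊢
  intro h0; apply hm; rw [coeff_C_mul, h0, mul_zero]

lemma supp_group {c : ℂ} {f : R3} {P : (Fin 3 →₀ ℕ) → Prop}
    (hf : ∀ m ∈ f.support, P (Finsupp.single 1 1 + m)) :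
    ∀ m ∈ (C c * y * f).support, P m := by
  rw [mul_assoc]
  apply supp_Cmul
  intro m hm
  have h2 := support_mul _ _ hm
  rw [Finset.mem_add] at h2
  obtain ⟨u, hu, w, hw, rfl⟩ := h2
  rw [y, support_X, Finset.mem_singleton] at hu
  subst hu
  exact hf w hw

lemma supp_term (c : ℂ) (a b d : ℕ) {P : (Fin 3 →₀ ℕ) → Prop}
    (h : P (Finsupp.single 0 a + (Finsupp.single 1 b + Finsupp.single 2 d))) :
    ∀ m ∈ (C c * x^a * y^b * z^d).support, P m := by
  intro m hm
  have he : C c * x^a * y^b * z^d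
      = monomial (Finsupp.single 0 a + (Finsupp.single 1 b + Finsupp.single 2 d)) c := by
    rw [x, y, z]
    simp [X_pow_eq_monomial, monomial_mul, C_mul_monomial, add_assoc]
  rw [he] at hm
  have h2 := support_monomial_subset hm
  simp only [Finset.mem_singleton] at h2
  rwa [h2]

lemma suppA_term (c : ℂ) (a b d : ℕ) (h : a ≤ 4) :
    ∀ m ∈ (C c * x^a * y^b * z^d).support, (m 0) ≤ 4 := by
  apply supp_term; simpa using h

lemma suppB_term (n : ℕ) (c : ℂ) (a b d : ℕ) (h : n ≤ a + d) :
    ∀ m ∈ (C c * x^a * y^b * z^d).support, n ≤ (m 0) + (m 2) := by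
  apply supp_term; simpa using h

lemma suppA_group (c : ℂ) (f : R3) (hf : ∀ m ∈ f.support, (m 0) ≤ 4) :
    ∀ m ∈ (C c * y * f).support, (m 0) ≤ 4 := by
  apply supp_group
  intro m hm
  simpa using hf m hm

lemma suppB_group (n : ℕ) (c : ℂ) (f : R3) (hf : ∀ m ∈ f.support, n ≤ (m 0) + (m 2)) :
    ∀ m ∈ (C c * y * f).support, n ≤ (m 0) + (m 2) := by
  apply supp_group
  intro m hm
  simpa using hf m hm

lemma alpha_sq : α^2 = 17 := by
  rw [α, ← Complex.ofReal_pow, Real.sq_sqrt (by norm_num)]; norm_num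
lemma beta_sq : β^2 = 21 + 5*α := by
  rw [β, α, ← Complex.ofReal_pow, Real.sq_sqrt (by positivity)]; push_cast; ring
lemma delta_sq : δ^2 = 5 + α := by
  rw [δ, α, ← Complex.ofReal_pow, Real.sq_sqrt (by positivity)]; push_cast; ring

lemma prime_of_equiv {R S : Type*} [CommRing R] [CommRing S] (e : R ≃+* S) {p : R}
    (hp : Prime (e p)) : Prime p := by
  refine ⟨fun h0 => hp.1 (by rw [h0, map_zero]), fun hu => hp.2.1 (hu.map e), fun a b hab => ?_⟩
  rcases hp.2.2 (e a) (e b) (by rw [← map_mul]; exact map_dvd e hab) with h | h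
  · left; have := map_dvd e.symm h; simpa using this
  · right; have := map_dvd e.symm h; simpa using this

lemma primeY : Prime (X 0 : R2) := by
  apply prime_of_equiv (finSuccEquiv ℂ 1).toRingEquiv
  have h : (finSuccEquiv ℂ 1) (X 0 : R2) = Polynomial.X := finSuccEquiv_X_zero
  simpa [h] using Polynomial.prime_X

lemma fseC (c : ℂ) : (finSuccEquiv ℂ 2) (C c) = Polynomial.C (C c) := by
  simp [finSuccEquiv_apply]
lemma fseY : (finSuccEquiv ℂ 2) (y) = Polynomial.C (X 0) := by
  rw [y, show (1 : Fin 3) = Fin.succ 0 from rfl, finSuccEquiv_X_succ]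
lemma fseZ : (finSuccEquiv ℂ 2) (z) = Polynomial.C (X 1) := by
  rw [z, show (2 : Fin 3) = Fin.succ 1 from rfl, finSuccEquiv_X_succ]
lemma fseX : (finSuccEquiv ℂ 2) (x) = Polynomial.X := by
  rw [x]; exact finSuccEquiv_X_zero

lemma hA1C : A1 = C (14408408592:ℂ) * x^4 * y^2 * z^1 + C (50076004923:ℂ) * x^4 * y^0 * z^3 + C (14182182144:ℂ) * x^3 * y^4 * z^0 + C (219953469600:ℂ) * x^3 * y^2 * z^2 + C (-363210576777:ℂ) * x^3 * y^0 * z^4 + C (-1093337332608:ℂ) * x^2 * y^2 * z^3 + C (831133690121:ℂ) * x^2 * y^0 * z^5 + C (858975454416:ℂ) * x^1 * y^2 * z^4 + C (-772939669603:ℂ) * x^1 * y^0 * z^6 + C (254940551336:ℂ) * x^0 * y^0 * z^7 := by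
  simp only [A1, map_neg, map_ofNat]; ring

lemma hA2C : A2 = C (-72389196288:ℂ) * x^4 * y^4 * z^0 + C (-3335393797632:ℂ) * x^4 * y^2 * z^2 + C (-1065820046526:ℂ) * x^4 * y^0 * z^4 + C (-8342111361024:ℂ) * x^3 * y^4 * z^1 + C (3945428471808:ℂ) * x^3 * y^2 * z^3 + C (10184161263912:ℂ) * x^3 * y^0 * z^5 + C (20168534212608:ℂ) * x^2 * y^4 * z^2 + C (53110876008192:ℂ) * x^2 * y^2 * z^4 + C (-32270723397636:ℂ) * x^2 * y^0 * z^6 + C (-100932292129536:ℂ) * x^1 * y^2 * z^5 + C (38252243189640:ℂ) * x^1 * y^0 * z^7 + C (47211381447168:ℂ) * x^0 * y^2 * z^6 + C (-15099861009390:ℂ) * x^0 * y^0 * z^8 := by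
  simp only [A2, map_neg, map_ofNat]; ring

lemma hA3C : A3 = C (15490159728:ℂ) * x^4 * y^2 * z^1 + C (53840161671:ℂ) * x^4 * y^0 * z^3 + C (15251365120:ℂ) * x^3 * y^4 * z^0 + C (236488232416:ℂ) * x^3 * y^2 * z^2 + C (-390512591333:ℂ) * x^3 * y^0 * z^4 + C (-1175521621376:ℂ) * x^2 * y^2 * z^3 + C (893608694925:ℂ) * x^2 * y^0 * z^5 + C (923543229232:ℂ) * x^1 * y^2 * z^4 + C (-831040262535:ℂ) * x^1 * y^0 * z^6 + C (274103997272:ℂ) * x^0 * y^0 * z^7 := by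
  simp only [A3, map_neg, map_ofNat]; ring

lemma hA4C : A4 = C (59398585488:ℂ) * x^4 * y^2 * z^1 + C (206468708787:ℂ) * x^4 * y^0 * z^3 + C (58496365824:ℂ) * x^3 * y^4 * z^0 + C (906899335584:ℂ) * x^3 * y^2 * z^2 + C (-1497555836337:ℂ) * x^3 * y^0 * z^4 + C (-4507944789888:ℂ) * x^2 * y^2 * z^3 + C (3426852351793:ℂ) * x^2 * y^0 * z^5 + C (3541646868816:ℂ) * x^1 * y^2 * z^4 + C (-3186912029723:ℂ) * x^1 * y^0 * z^6 + C (1051146805480:ℂ) * x^0 * y^0 * z^7 := by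
  simp only [A4, map_neg, map_ofNat]; ring

lemma hA5C : A5 = C (-466877917440:ℂ) * x^4 * y^4 * z^0 + C (-21516582641184:ℂ) * x^4 * y^2 * z^2 + C (-6875617032333:ℂ) * x^4 * y^0 * z^4 + C (-53815549731840:ℂ) * x^3 * y^4 * z^1 + C (25451977456512:ℂ) * x^3 * y^2 * z^3 + C (65698123816692:ℂ) * x^3 * y^0 * z^5 + C (130107481479168:ℂ) * x^2 * y^4 * z^2 + C (342618718898784:ℂ) * x^2 * y^2 * z^4 + C (-208178748305934:ℂ) * x^2 * y^0 * z^6 + C (-651115201689280:ℂ) * x^1 * y^2 * z^5 + C (246765593291124:ℂ) * x^1 * y^0 * z^7 + C (304561087975168:ℂ) * x^0 * y^2 * z^6 + C (-97409351769549:ℂ) * x^0 * y^0 * z^8 := by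
  simp only [A5, map_neg, map_ofNat]; ring

lemma hA6C : A6 = C (-298344909312:ℂ) * x^4 * y^4 * z^0 + C (-13752106145280:ℂ) * x^4 * y^2 * z^2 + C (-4394491299054:ℂ) * x^4 * y^0 * z^4 + C (-34395989170176:ℂ) * x^3 * y^4 * z^1 + C (16267404201984:ℂ) * x^3 * y^2 * z^3 + C (41990375439720:ℂ) * x^3 * y^0 * z^5 + C (83157067186176:ℂ) * x^2 * y^4 * z^2 + C (218981688444672:ℂ) * x^2 * y^2 * z^4 + C (-133055599121316:ℂ) * x^2 * y^0 * z^6 + C (-416154499902208:ℂ) * x^1 * y^2 * z^5 + C (157718037119688:ℂ) * x^1 * y^0 * z^7 + C (194657513400832:ℂ) * x^0 * y^2 * z^6 + C (-62258322139038:ℂ) * x^0 * y^0 * z^8 := by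
  simp only [A6, map_neg, map_ofNat]; ring

lemma hA7C : A7 = C (191605550544:ℂ) * x^4 * y^2 * z^1 + C (665965983645:ℂ) * x^4 * y^0 * z^3 + C (188641373952:ℂ) * x^3 * y^4 * z^0 + C (2925195141792:ℂ) * x^3 * y^2 * z^2 + C (-4830373865031:ℂ) * x^3 * y^0 * z^4 + C (-14540399432832:ℂ) * x^2 * y^2 * z^3 + C (11053328983807:ℂ) * x^2 * y^0 * z^5 + C (11423598740496:ℂ) * x^1 * y^2 * z^4 + C (-10279400307101:ℂ) * x^1 * y^0 * z^6 + C (3390479204680:ℂ) * x^0 * y^0 * z^7 := by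
  simp only [A7, map_neg, map_ofNat]; ring

lemma hA8C : A8 = C (-1925078503680:ℂ) * x^4 * y^4 * z^0 + C (-88715185482528:ℂ) * x^4 * y^2 * z^2 + C (-28348893570645:ℂ) * x^4 * y^0 * z^4 + C (-221886790124544:ℂ) * x^3 * y^4 * z^1 + C (104941198124928:ℂ) * x^3 * y^2 * z^3 + C (270880301999124:ℂ) * x^3 * y^0 * z^5 + C (536446841591808:ℂ) * x^2 * y^4 * z^2 + C (1412653204386144:ℂ) * x^2 * y^2 * z^4 + C (-858342969385662:ℂ) * x^2 * y^0 * z^6 + C (-2684616751584448:ℂ) * x^1 * y^2 * z^5 + C (1017440607056532:ℂ) * x^1 * y^0 * z^7 + C (1255737534555904:ℂ) * x^0 * y^2 * z^6 + C (-401629046099349:ℂ) * x^0 * y^0 * z^8 := by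
  simp only [A8, map_neg, map_ofNat]; ring

lemma stA : ∀ m ∈ F.support, (m 0) ≤ 4 := by
  simp only [F, hA1C, hA2C, hA3C, hA4C, hA5C, hA6C, hA7C, hA8C]
  exact (mem_supp_add (mem_supp_add (mem_supp_add (mem_supp_add (mem_supp_add (mem_supp_add (mem_supp_add (suppA_group _ _ (mem_supp_add (mem_supp_add (mem_supp_add (mem_supp_add (mem_supp_add (mem_supp_add (mem_supp_add (mem_supp_add (mem_supp_add (suppA_term _ _ _ _ (by norm_num)) (suppA_term _ _ _ _ (by norm_num))) (suppA_term _ _ _ _ (by norm_num))) (suppA_term _ _ _ _ (by norm_num))) (suppA_term _ _ _ _ (by norm_num))) (suppA_term _ _ _ _ (by norm_num))) (suppA_term _ _ _ _ (by norm_num))) (suppA_term _ _ _ _ (by norm_num))) (suppA_term _ _ _ _ (by norm_num))) (suppA_term _ _ _ _ (by norm_num)))) (supp_Cmul (mem_supp_add (mem_supp_add (mem_supp_add (mem_supp_add (mem_supp_add (mem_supp_add (mem_supp_add (mem_supp_add (mem_supp_add (mem_supp_add (mem_supp_add (mem_supp_add (suppA_term _ _ _ _ (by norm_num)) (suppA_term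 _ _ _ _ (by norm_num))) (suppA_term _ _ _ _ (by norm_num))) (suppA_term _ _ _ _ (by norm_num))) (suppA_term _ _ _ _ (by norm_num))) (suppA_term _ _ _ _ (by norm_num))) (suppA_term _ _ _ _ (by norm_num))) (suppA_term _ _ _ _ (by norm_num))) (suppA_term _ _ _ _ (by norm_num))) (suppA_term _ _ _ _ (by norm_num))) (suppA_term _ _ _ _ (by norm_num))) (suppA_term _ _ _ _ (by norm_num))) (suppA_term _ _ _ _ (by norm_num))))) (suppA_group _ _ (mem_supp_add (mem_supp_add (mem_supp_add (mem_supp_add (mem_supp_add (mem_supp_add (mem_supp_add (mem_supp_add (mem_supp_add (suppA_term _ _ _ _ (by norm_num)) (suppA_term _ _ _ _ (by norm_num))) (suppA_term _ _ _ _ (by norm_num))) (suppA_term _ _ _ _ (by norm_num))) (suppA_term _ _ _ _ (by norm_num))) (suppA_term _ _ _ _ (by norm_num))) (suppA_term _ _ _ _ (by norm_num))) (suppA_term _ _ _ _ (by norm_num))) (suppA_term _ _ _ _ (by norm_num))) (suppA_term _ _ _ _ (by norm_num))))) (suppA_group _ _ (mem_supp_add (mem_supp_add (mem_supp_add (mem_supp_add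 (mem_supp_add (mem_supp_add (mem_supp_add (mem_supp_add (mem_supp_add (suppA_term _ _ _ _ (by norm_num)) (suppA_term _ _ _ _ (by norm_num))) (suppA_term _ _ _ _ (by norm_num))) (suppA_term _ _ _ _ (by norm_num))) (suppA_term _ _ _ _ (by norm_num))) (suppA_term _ _ _ _ (by norm_num))) (suppA_term _ _ _ _ (by norm_num))) (suppA_term _ _ _ _ (by norm_num))) (suppA_term _ _ _ _ (by norm_num))) (suppA_term _ _ _ _ (by norm_num))))) (supp_Cmul (mem_supp_add (mem_supp_add (mem_supp_add (mem_supp_add (mem_supp_add (mem_supp_add (mem_supp_add (mem_supp_add (mem_supp_add (mem_supp_add (mem_supp_add (mem_supp_add (suppA_term _ _ _ _ (by norm_num)) (suppA_term _ _ _ _ (by norm_num))) (suppA_term _ _ _ _ (by norm_num))) (suppA_term _ _ _ _ (by norm_num))) (suppA_term _ _ _ _ (by norm_num))) (suppA_term _ _ _ _ (by norm_num))) (suppA_term _ _ _ _ (by norm_num))) (suppA_term _ _ _ _ (by norm_num))) (suppA_term _ _ _ _ (by norm_num))) (suppA_term _ _ _ _ (by norm_num))) (suppA_term _ _ _ _ (by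 norm_num))) (suppA_term _ _ _ _ (by norm_num))) (suppA_term _ _ _ _ (by norm_num))))) (supp_Cmul (mem_supp_add (mem_supp_add (mem_supp_add (mem_supp_add (mem_supp_add (mem_supp_add (mem_supp_add (mem_supp_add (mem_supp_add (mem_supp_add (mem_supp_add (mem_supp_add (suppA_term _ _ _ _ (by norm_num)) (suppA_term _ _ _ _ (by norm_num))) (suppA_term _ _ _ _ (by norm_num))) (suppA_term _ _ _ _ (by norm_num))) (suppA_term _ _ _ _ (by norm_num))) (suppA_term _ _ _ _ (by norm_num))) (suppA_term _ _ _ _ (by norm_num))) (suppA_term _ _ _ _ (by norm_num))) (suppA_term _ _ _ _ (by norm_num))) (suppA_term _ _ _ _ (by norm_num))) (suppA_term _ _ _ _ (by norm_num))) (suppA_term _ _ _ _ (by norm_num))) (suppA_term _ _ _ _ (by norm_num))))) (suppA_group _ _ (mem_supp_add (mem_supp_add (mem_supp_add (mem_supp_add (mem_supp_add (mem_supp_add (mem_supp_add (mem_supp_add (mem_supp_add (suppA_term _ _ _ _ (by norm_num)) (suppA_term _ _ _ _ (by norm_num))) (suppA_term _ _ _ _ (by norm_num))) (suppA_term _ _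 _ _ (by norm_num))) (suppA_term _ _ _ _ (by norm_num))) (suppA_term _ _ _ _ (by norm_num))) (suppA_term _ _ _ _ (by norm_num))) (suppA_term _ _ _ _ (by norm_num))) (suppA_term _ _ _ _ (by norm_num))) (suppA_term _ _ _ _ (by norm_num))))) (mem_supp_add (mem_supp_add (mem_supp_add (mem_supp_add (mem_supp_add (mem_supp_add (mem_supp_add (mem_supp_add (mem_supp_add (mem_supp_add (mem_supp_add (mem_supp_add (suppA_term _ _ _ _ (by norm_num)) (suppA_term _ _ _ _ (by norm_num))) (suppA_term _ _ _ _ (by norm_num))) (suppA_term _ _ _ _ (by norm_num))) (suppA_term _ _ _ _ (by norm_num))) (suppA_term _ _ _ _ (by norm_num))) (suppA_term _ _ _ _ (by norm_num))) (suppA_term _ _ _ _ (by norm_num))) (suppA_term _ _ _ _ (by norm_num))) (suppA_term _ _ _ _ (by norm_num))) (suppA_term _ _ _ _ (by norm_num))) (suppA_term _ _ _ _ (by norm_num))) (suppA_term _ _ _ _ (by norm_num))))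

lemma stB1 : ∀ m ∈ F.support, 3 ≤ (m 0) + (m 2) := by
  simp only [F, hA1C, hA2C, hA3C, hA4C, hA5C, hA6C, hA7C, hA8C]
  exact (mem_supp_add (mem_supp_add (mem_supp_add (mem_supp_add (mem_supp_add (mem_supp_add (mem_supp_add (suppB_group 3 _ _ (mem_supp_add (mem_supp_add (mem_supp_add (mem_supp_add (mem_supp_add (mem_supp_add (mem_supp_add (mem_supp_add (mem_supp_add (suppB_term _ _ _ _ _ (by norm_num)) (suppB_term _ _ _ _ _ (by norm_num))) (suppB_term _ _ _ _ _ (by norm_num))) (suppB_term _ _ _ _ _ (by norm_num))) (suppB_term _ _ _ _ _ (by norm_num))) (suppB_term _ _ _ _ _ (by norm_num))) (suppB_term _ _ _ _ _ (by norm_num))) (suppB_term _ _ _ _ _ (by norm_num))) (suppB_term _ _ _ _ _ (by norm_num))) (suppB_term _ _ _ _ _ (by norm_num)))) (supp_Cmul (mem_supp_add (mem_supp_add (mem_supp_add (mem_supp_add (mem_supp_add (mem_supp_add (mem_supp_add (mem_supp_add (mem_supp_add (mem_supp_add (mem_supp_add (mem_supp_add (suppB_term _ _ _ _ _ (by norm_num))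 (suppB_term _ _ _ _ _ (by norm_num))) (suppB_term _ _ _ _ _ (by norm_num))) (suppB_term _ _ _ _ _ (by norm_num))) (suppB_term _ _ _ _ _ (by norm_num))) (suppB_term _ _ _ _ _ (by norm_num))) (suppB_term _ _ _ _ _ (by norm_num))) (suppB_term _ _ _ _ _ (by norm_num))) (suppB_term _ _ _ _ _ (by norm_num))) (suppB_term _ _ _ _ _ (by norm_num))) (suppB_term _ _ _ _ _ (by norm_num))) (suppB_term _ _ _ _ _ (by norm_num))) (suppB_term _ _ _ _ _ (by norm_num))))) (suppB_group 3 _ _ (mem_supp_add (mem_supp_add (mem_supp_add (mem_supp_add (mem_supp_add (mem_supp_add (mem_supp_add (mem_supp_add (mem_supp_add (suppB_term _ _ _ _ _ (by norm_num)) (suppB_term _ _ _ _ _ (by norm_num))) (suppB_term _ _ _ _ _ (by norm_num))) (suppB_term _ _ _ _ _ (by norm_num))) (suppB_term _ _ _ _ _ (by norm_num))) (suppB_term _ _ _ _ _ (by norm_num))) (suppB_term _ _ _ _ _ (by norm_num))) (suppB_term _ _ _ _ _ (by norm_num))) (suppB_term _ _ _ _ _ (by norm_num))) (suppB_term _ _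 _ _ _ (by norm_num))))) (suppB_group 3 _ _ (mem_supp_add (mem_supp_add (mem_supp_add (mem_supp_add (mem_supp_add (mem_supp_add (mem_supp_add (mem_supp_add (mem_supp_add (suppB_term _ _ _ _ _ (by norm_num)) (suppB_term _ _ _ _ _ (by norm_num))) (suppB_term _ _ _ _ _ (by norm_num))) (suppB_term _ _ _ _ _ (by norm_num))) (suppB_term _ _ _ _ _ (by norm_num))) (suppB_term _ _ _ _ _ (by norm_num))) (suppB_term _ _ _ _ _ (by norm_num))) (suppB_term _ _ _ _ _ (by norm_num))) (suppB_term _ _ _ _ _ (by norm_num))) (suppB_term _ _ _ _ _ (by norm_num))))) (supp_Cmul (mem_supp_add (mem_supp_add (mem_supp_add (mem_supp_add (mem_supp_add (mem_supp_add (mem_supp_add (mem_supp_add (mem_supp_add (mem_supp_add (mem_supp_add (mem_supp_add (suppB_term _ _ _ _ _ (by norm_num)) (suppB_term _ _ _ _ _ (by norm_num))) (suppB_term _ _ _ _ _ (by norm_num))) (suppB_term _ _ _ _ _ (by norm_num))) (suppB_term _ _ _ _ _ (by norm_num))) (suppB_term _ _ _ _ _ (by norm_num))) (suppB_term _ _ _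 _ _ (by norm_num))) (suppB_term _ _ _ _ _ (by norm_num))) (suppB_term _ _ _ _ _ (by norm_num))) (suppB_term _ _ _ _ _ (by norm_num))) (suppB_term _ _ _ _ _ (by norm_num))) (suppB_term _ _ _ _ _ (by norm_num))) (suppB_term _ _ _ _ _ (by norm_num))))) (supp_Cmul (mem_supp_add (mem_supp_add (mem_supp_add (mem_supp_add (mem_supp_add (mem_supp_add (mem_supp_add (mem_supp_add (mem_supp_add (mem_supp_add (mem_supp_add (mem_supp_add (suppB_term _ _ _ _ _ (by norm_num)) (suppB_term _ _ _ _ _ (by norm_num))) (suppB_term _ _ _ _ _ (by norm_num))) (suppB_term _ _ _ _ _ (by norm_num))) (suppB_term _ _ _ _ _ (by norm_num))) (suppB_term _ _ _ _ _ (by norm_num))) (suppB_term _ _ _ _ _ (by norm_num))) (suppB_term _ _ _ _ _ (by norm_num))) (suppB_term _ _ _ _ _ (by norm_num))) (suppB_term _ _ _ _ _ (by norm_num))) (suppB_term _ _ _ _ _ (by norm_num))) (suppB_term _ _ _ _ _ (by norm_num))) (suppB_term _ _ _ _ _ (by norm_num))))) (suppB_group 3 _ _ (mem_supp_add (mem_supp_add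 (mem_supp_add (mem_supp_add (mem_supp_add (mem_supp_add (mem_supp_add (mem_supp_add (mem_supp_add (suppB_term _ _ _ _ _ (by norm_num)) (suppB_term _ _ _ _ _ (by norm_num))) (suppB_term _ _ _ _ _ (by norm_num))) (suppB_term _ _ _ _ _ (by norm_num))) (suppB_term _ _ _ _ _ (by norm_num))) (suppB_term _ _ _ _ _ (by norm_num))) (suppB_term _ _ _ _ _ (by norm_num))) (suppB_term _ _ _ _ _ (by norm_num))) (suppB_term _ _ _ _ _ (by norm_num))) (suppB_term _ _ _ _ _ (by norm_num))))) (mem_supp_add (mem_supp_add (mem_supp_add (mem_supp_add (mem_supp_add (mem_supp_add (mem_supp_add (mem_supp_add (mem_supp_add (mem_supp_add (mem_supp_add (mem_supp_add (suppB_term _ _ _ _ _ (by norm_num)) (suppB_term _ _ _ _ _ (by norm_num))) (suppB_term _ _ _ _ _ (by norm_num))) (suppB_term _ _ _ _ _ (by norm_num))) (suppB_term _ _ _ _ _ (by norm_num))) (suppB_term _ _ _ _ _ (by norm_num))) (suppB_term _ _ _ _ _ (by norm_num))) (suppB_term _ _ _ _ _ (by norm_num))) (suppB_term _ _ _ _ _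 (by norm_num))) (suppB_term _ _ _ _ _ (by norm_num))) (suppB_term _ _ _ _ _ (by norm_num))) (suppB_term _ _ _ _ _ (by norm_num))) (suppB_term _ _ _ _ _ (by norm_num))))

lemma hG : F - C cTriple * x^3 * y^5 = C (24*α*β*δ) * y * (C (14408408592:ℂ) * x^4 * y^2 * z^1 + C (50076004923:ℂ) * x^4 * y^0 * z^3 + C (219953469600:ℂ) * x^3 * y^2 * z^2 + C (-363210576777:ℂ) * x^3 * y^0 * z^4 + C (-1093337332608:ℂ) * x^2 * y^2 * z^3 + C (831133690121:ℂ) * x^2 * y^0 * z^5 + C (858975454416:ℂ) * x^1 * y^2 * z^4 + C (-772939669603:ℂ) * x^1 * y^0 * z^6 + C (254940551336:ℂ) * x^0 * y^0 * z^7) + C (α*β) * (C (-72389196288:ℂ) * x^4 * y^4 * z^0 + C (-3335393797632:ℂ) * x^4 * y^2 * z^2 + C (-1065820046526:ℂ) * x^4 * y^0 * z^4 + C (-8342111361024:ℂ) * x^3 * y^4 * z^1 + C (3945428471808:ℂ) * x^3 * y^2 * z^3 + C (10184161263912:ℂ) * x^3 * y^0 * z^5 + C (20168534212608:ℂ) *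 x^2 * y^4 * z^2 + C (53110876008192:ℂ) * x^2 * y^2 * z^4 + C (-32270723397636:ℂ) * x^2 * y^0 * z^6 + C (-100932292129536:ℂ) * x^1 * y^2 * z^5 + C (38252243189640:ℂ) * x^1 * y^0 * z^7 + C (47211381447168:ℂ) * x^0 * y^2 * z^6 + C (-15099861009390:ℂ) * x^0 * y^0 * z^8) + C (144*α*δ) * y * (C (15490159728:ℂ) * x^4 * y^2 * z^1 + C (53840161671:ℂ) * x^4 * y^0 * z^3 + C (236488232416:ℂ) * x^3 * y^2 * z^2 + C (-390512591333:ℂ) * x^3 * y^0 * z^4 + C (-1175521621376:ℂ) * x^2 * y^2 * z^3 + C (893608694925:ℂ) * x^2 * y^0 * z^5 + C (923543229232:ℂ) * x^1 * y^2 * z^4 + C (-831040262535:ℂ) * x^1 * y^0 * z^6 + C (274103997272:ℂ) * x^0 * y^0 * z^7) + C (24*β*δ) * y * (C (59398585488:ℂ) * x^4 * y^2 * z^1 + C (206468708787:ℂ) * x^4 * y^0 * z^3 + C (906899335584:ℂ) * x^3 * y^2 * z^2 + C (-1497555836337:ℂ) * x^3 * y^0 * z^4 + C (-4507944789888:ℂ)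 * x^2 * y^2 * z^3 + C (3426852351793:ℂ) * x^2 * y^0 * z^5 + C (3541646868816:ℂ) * x^1 * y^2 * z^4 + C (-3186912029723:ℂ) * x^1 * y^0 * z^6 + C (1051146805480:ℂ) * x^0 * y^0 * z^7) + C (α) * (C (-466877917440:ℂ) * x^4 * y^4 * z^0 + C (-21516582641184:ℂ) * x^4 * y^2 * z^2 + C (-6875617032333:ℂ) * x^4 * y^0 * z^4 + C (-53815549731840:ℂ) * x^3 * y^4 * z^1 + C (25451977456512:ℂ) * x^3 * y^2 * z^3 + C (65698123816692:ℂ) * x^3 * y^0 * z^5 + C (130107481479168:ℂ) * x^2 * y^4 * z^2 + C (342618718898784:ℂ) * x^2 * y^2 * z^4 + C (-208178748305934:ℂ) * x^2 * y^0 * z^6 + C (-651115201689280:ℂ) * x^1 * y^2 * z^5 + C (246765593291124:ℂ) * x^1 * y^0 * z^7 + C (304561087975168:ℂ) * x^0 * y^2 * z^6 + C (-97409351769549:ℂ) * x^0 * y^0 * z^8) + C (β) * (C (-298344909312:ℂ) * x^4 * y^4 * z^0 + C (-13752106145280:ℂ) * x^4 * y^2 * z^2 + C (-4394491299054:ℂ)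 * x^4 * y^0 * z^4 + C (-34395989170176:ℂ) * x^3 * y^4 * z^1 + C (16267404201984:ℂ) * x^3 * y^2 * z^3 + C (41990375439720:ℂ) * x^3 * y^0 * z^5 + C (83157067186176:ℂ) * x^2 * y^4 * z^2 + C (218981688444672:ℂ) * x^2 * y^2 * z^4 + C (-133055599121316:ℂ) * x^2 * y^0 * z^6 + C (-416154499902208:ℂ) * x^1 * y^2 * z^5 + C (157718037119688:ℂ) * x^1 * y^0 * z^7 + C (194657513400832:ℂ) * x^0 * y^2 * z^6 + C (-62258322139038:ℂ) * x^0 * y^0 * z^8) + C (48*δ) * y * (C (191605550544:ℂ) * x^4 * y^2 * z^1 + C (665965983645:ℂ) * x^4 * y^0 * z^3 + C (2925195141792:ℂ) * x^3 * y^2 * z^2 + C (-4830373865031:ℂ) * x^3 * y^0 * z^4 + C (-14540399432832:ℂ) * x^2 * y^2 * z^3 + C (11053328983807:ℂ) * x^2 * y^0 * z^5 + C (11423598740496:ℂ) * x^1 * y^2 * z^4 + C (-10279400307101:ℂ) * x^1 * y^0 * z^6 + C (3390479204680:ℂ) * x^0 * y^0 * z^7) + (C (-1925078503680:ℂ) *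 x^4 * y^4 * z^0 + C (-88715185482528:ℂ) * x^4 * y^2 * z^2 + C (-28348893570645:ℂ) * x^4 * y^0 * z^4 + C (-221886790124544:ℂ) * x^3 * y^4 * z^1 + C (104941198124928:ℂ) * x^3 * y^2 * z^3 + C (270880301999124:ℂ) * x^3 * y^0 * z^5 + C (536446841591808:ℂ) * x^2 * y^4 * z^2 + C (1412653204386144:ℂ) * x^2 * y^2 * z^4 + C (-858342969385662:ℂ) * x^2 * y^0 * z^6 + C (-2684616751584448:ℂ) * x^1 * y^2 * z^5 + C (1017440607056532:ℂ) * x^1 * y^0 * z^7 + C (1255737534555904:ℂ) * x^0 * y^2 * z^6 + C (-401629046099349:ℂ) * x^0 * y^0 * z^8) := by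
  simp only [F, A1, A2, A3, A4, A5, A6, A7, A8, cTriple, map_add, map_mul, map_neg, map_ofNat]
  ring

lemma stB2 : ∀ m ∈ (F - C cTriple * x^3 * y^5).support, 4 ≤ (m 0) + (m 2) := by
  rw [hG]
  exact (mem_supp_add (mem_supp_add (mem_supp_add (mem_supp_add (mem_supp_add (mem_supp_add (mem_supp_add (suppB_group 4 _ _ (mem_supp_add (mem_supp_add (mem_supp_add (mem_supp_add (mem_supp_add (mem_supp_add (mem_supp_add (mem_supp_add (suppB_term _ _ _ _ _ (by norm_num)) (suppB_term _ _ _ _ _ (by norm_num))) (suppB_term _ _ _ _ _ (by norm_num))) (suppB_term _ _ _ _ _ (by norm_num))) (suppB_term _ _ _ _ _ (by norm_num))) (suppB_term _ _ _ _ _ (by norm_num))) (suppB_term _ _ _ _ _ (by norm_num))) (suppB_term _ _ _ _ _ (by norm_num))) (suppB_term _ _ _ _ _ (by norm_num)))) (supp_Cmul (mem_supp_add (mem_supp_add (mem_supp_add (mem_supp_add (mem_supp_add (mem_supp_add (mem_supp_add (mem_supp_add (mem_supp_add (mem_supp_add (mem_supp_add (mem_supp_add (suppB_term _ _ _ _ _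 (by norm_num)) (suppB_term _ _ _ _ _ (by norm_num))) (suppB_term _ _ _ _ _ (by norm_num))) (suppB_term _ _ _ _ _ (by norm_num))) (suppB_term _ _ _ _ _ (by norm_num))) (suppB_term _ _ _ _ _ (by norm_num))) (suppB_term _ _ _ _ _ (by norm_num))) (suppB_term _ _ _ _ _ (by norm_num))) (suppB_term _ _ _ _ _ (by norm_num))) (suppB_term _ _ _ _ _ (by norm_num))) (suppB_term _ _ _ _ _ (by norm_num))) (suppB_term _ _ _ _ _ (by norm_num))) (suppB_term _ _ _ _ _ (by norm_num))))) (suppB_group 4 _ _ (mem_supp_add (mem_supp_add (mem_supp_add (mem_supp_add (mem_supp_add (mem_supp_add (mem_supp_add (mem_supp_add (suppB_term _ _ _ _ _ (by norm_num)) (suppB_term _ _ _ _ _ (by norm_num))) (suppB_term _ _ _ _ _ (by norm_num))) (suppB_term _ _ _ _ _ (by norm_num))) (suppB_term _ _ _ _ _ (by norm_num))) (suppB_term _ _ _ _ _ (by norm_num))) (suppB_term _ _ _ _ _ (by norm_num))) (suppB_term _ _ _ _ _ (by norm_num))) (suppB_term _ _ _ _ _ (by norm_num))))) (suppB_group 4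 _ _ (mem_supp_add (mem_supp_add (mem_supp_add (mem_supp_add (mem_supp_add (mem_supp_add (mem_supp_add (mem_supp_add (suppB_term _ _ _ _ _ (by norm_num)) (suppB_term _ _ _ _ _ (by norm_num))) (suppB_term _ _ _ _ _ (by norm_num))) (suppB_term _ _ _ _ _ (by norm_num))) (suppB_term _ _ _ _ _ (by norm_num))) (suppB_term _ _ _ _ _ (by norm_num))) (suppB_term _ _ _ _ _ (by norm_num))) (suppB_term _ _ _ _ _ (by norm_num))) (suppB_term _ _ _ _ _ (by norm_num))))) (supp_Cmul (mem_supp_add (mem_supp_add (mem_supp_add (mem_supp_add (mem_supp_add (mem_supp_add (mem_supp_add (mem_supp_add (mem_supp_add (mem_supp_add (mem_supp_add (mem_supp_add (suppB_term _ _ _ _ _ (by norm_num)) (suppB_term _ _ _ _ _ (by norm_num))) (suppB_term _ _ _ _ _ (by norm_num))) (suppB_term _ _ _ _ _ (by norm_num))) (suppB_term _ _ _ _ _ (by norm_num))) (suppB_term _ _ _ _ _ (by norm_num))) (suppB_term _ _ _ _ _ (by norm_num))) (suppB_term _ _ _ _ _ (by norm_num))) (suppB_term _ _ _ _ _ (by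 norm_num))) (suppB_term _ _ _ _ _ (by norm_num))) (suppB_term _ _ _ _ _ (by norm_num))) (suppB_term _ _ _ _ _ (by norm_num))) (suppB_term _ _ _ _ _ (by norm_num))))) (supp_Cmul (mem_supp_add (mem_supp_add (mem_supp_add (mem_supp_add (mem_supp_add (mem_supp_add (mem_supp_add (mem_supp_add (mem_supp_add (mem_supp_add (mem_supp_add (mem_supp_add (suppB_term _ _ _ _ _ (by norm_num)) (suppB_term _ _ _ _ _ (by norm_num))) (suppB_term _ _ _ _ _ (by norm_num))) (suppB_term _ _ _ _ _ (by norm_num))) (suppB_term _ _ _ _ _ (by norm_num))) (suppB_term _ _ _ _ _ (by norm_num))) (suppB_term _ _ _ _ _ (by norm_num))) (suppB_term _ _ _ _ _ (by norm_num))) (suppB_term _ _ _ _ _ (by norm_num))) (suppB_term _ _ _ _ _ (by norm_num))) (suppB_term _ _ _ _ _ (by norm_num))) (suppB_term _ _ _ _ _ (by norm_num))) (suppB_term _ _ _ _ _ (by norm_num))))) (suppB_group 4 _ _ (mem_supp_add (mem_supp_add (mem_supp_add (mem_supp_add (mem_supp_add (mem_supp_add (mem_supp_add (mem_supp_add (suppB_term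 _ _ _ _ _ (by norm_num)) (suppB_term _ _ _ _ _ (by norm_num))) (suppB_term _ _ _ _ _ (by norm_num))) (suppB_term _ _ _ _ _ (by norm_num))) (suppB_term _ _ _ _ _ (by norm_num))) (suppB_term _ _ _ _ _ (by norm_num))) (suppB_term _ _ _ _ _ (by norm_num))) (suppB_term _ _ _ _ _ (by norm_num))) (suppB_term _ _ _ _ _ (by norm_num))))) (mem_supp_add (mem_supp_add (mem_supp_add (mem_supp_add (mem_supp_add (mem_supp_add (mem_supp_add (mem_supp_add (mem_supp_add (mem_supp_add (mem_supp_add (mem_supp_add (suppB_term _ _ _ _ _ (by norm_num)) (suppB_term _ _ _ _ _ (by norm_num))) (suppB_term _ _ _ _ _ (by norm_num))) (suppB_term _ _ _ _ _ (by norm_num))) (suppB_term _ _ _ _ _ (by norm_num))) (suppB_term _ _ _ _ _ (by norm_num))) (suppB_term _ _ _ _ _ (by norm_num))) (suppB_term _ _ _ _ _ (by norm_num))) (suppB_term _ _ _ _ _ (by norm_num))) (suppB_term _ _ _ _ _ (by norm_num))) (suppB_term _ _ _ _ _ (by norm_num))) (suppB_term _ _ _ _ _ (by norm_num))) (suppB_term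 _ _ _ _ _ (by norm_num))))

def g0 : R2 := C (24*α*β*δ) * (X 0) * ((254940551336)*(X 1)^7) + C (α*β) * ((47211381447168)*(X 0)^2*(X 1)^6 + (-15099861009390)*(X 1)^8) + C (144*α*δ) * (X 0) * ((274103997272)*(X 1)^7) + C (24*β*δ) * (X 0) * ((1051146805480)*(X 1)^7) + C (α) * ((304561087975168)*(X 0)^2*(X 1)^6 + (-97409351769549)*(X 1)^8) + C (β) * ((194657513400832)*(X 0)^2*(X 1)^6 + (-62258322139038)*(X 1)^8) + C (48*δ) * (X 0) * ((3390479204680)*(X 1)^7) + ((1255737534555904)*(X 0)^2*(X 1)^6 + (-401629046099349)*(X 1)^8)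
def g1 : R2 := C (24*α*β*δ) * (X 0) * ((858975454416)*(X 0)^2*(X 1)^4 + (-772939669603)*(X 1)^6) + C (α*β) * ((-100932292129536)*(X 0)^2*(X 1)^5 + (38252243189640)*(X 1)^7) + C (144*α*δ) * (X 0) * ((923543229232)*(X 0)^2*(X 1)^4 + (-831040262535)*(X 1)^6) + C (24*β*δ) * (X 0) * ((3541646868816)*(X 0)^2*(X 1)^4 + (-3186912029723)*(X 1)^6) + C (α) * ((-651115201689280)*(X 0)^2*(X 1)^5 + (246765593291124)*(X 1)^7) + C (β) * ((-416154499902208)*(X 0)^2*(X 1)^5 + (157718037119688)*(X 1)^7) + C (48*δ) * (X 0) * ((11423598740496)*(X 0)^2*(X 1)^4 + (-10279400307101)*(X 1)^6) + ((-2684616751584448)*(X 0)^2*(X 1)^5 + (1017440607056532)*(X 1)^7)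
def g2 : R2 := C (24*α*β*δ) * (X 0) * ((-1093337332608)*(X 0)^2*(X 1)^3 + (831133690121)*(X 1)^5) + C (α*β) * ((20168534212608)*(X 0)^4*(X 1)^2 + (53110876008192)*(X 0)^2*(X 1)^4 + (-32270723397636)*(X 1)^6) + C (144*α*δ) * (X 0) * ((-1175521621376)*(X 0)^2*(X 1)^3 + (893608694925)*(X 1)^5) + C (24*β*δ) * (X 0) * ((-4507944789888)*(X 0)^2*(X 1)^3 + (3426852351793)*(X 1)^5) + C (α) * ((130107481479168)*(X 0)^4*(X 1)^2 + (342618718898784)*(X 0)^2*(X 1)^4 + (-208178748305934)*(X 1)^6) + C (β) * ((83157067186176)*(X 0)^4*(X 1)^2 + (218981688444672)*(X 0)^2*(X 1)^4 + (-133055599121316)*(X 1)^6) + C (48*δ) * (X 0) * ((-14540399432832)*(X 0)^2*(X 1)^3 + (11053328983807)*(X 1)^5) + ((536446841591808)*(X 0)^4*(X 1)^2 + (1412653204386144)*(X 0)^2*(X 1)^4 + (-858342969385662)*(X 1)^6)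
def g3 : R2 := C (24*α*β*δ) * (X 0) * ((14182182144)*(X 0)^4 + (219953469600)*(X 0)^2*(X 1)^2 + (-363210576777)*(X 1)^4) + C (α*β) * ((-8342111361024)*(X 0)^4*(X 1)^1 + (3945428471808)*(X 0)^2*(X 1)^3 + (10184161263912)*(X 1)^5) + C (144*α*δ) * (X 0) * ((15251365120)*(X 0)^4 + (236488232416)*(X 0)^2*(X 1)^2 + (-390512591333)*(X 1)^4) + C (24*β*δ) * (X 0) * ((58496365824)*(X 0)^4 + (906899335584)*(X 0)^2*(X 1)^2 + (-1497555836337)*(X 1)^4) + C (α) * ((-53815549731840)*(X 0)^4*(X 1)^1 + (25451977456512)*(X 0)^2*(X 1)^3 + (65698123816692)*(X 1)^5) + C (β) * ((-34395989170176)*(X 0)^4*(X 1)^1 + (16267404201984)*(X 0)^2*(X 1)^3 + (41990375439720)*(X 1)^5) + C (48*δ) * (X 0) * ((188641373952)*(X 0)^4 + (2925195141792)*(X 0)^2*(X 1)^2 + (-4830373865031)*(X 1)^4) + ((-221886790124544)*(X 0)^4*(X 1)^1 + (104941198124928)*(X 0)^2*(X 1)^3 + (270880301999124)*(X 1)^5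)
def fQ : R2 := C (24*α*β*δ) * (X 0) * (C (14408408592:ℂ) * (X 0)^2 * (X 1)^1 + C (50076004923:ℂ) * (X 0)^0 * (X 1)^3) + C (α*β) * (C (-72389196288:ℂ) * (X 0)^4 * (X 1)^0 + C (-3335393797632:ℂ) * (X 0)^2 * (X 1)^2 + C (-1065820046526:ℂ) * (X 0)^0 * (X 1)^4) + C (144*α*δ) * (X 0) * (C (15490159728:ℂ) * (X 0)^2 * (X 1)^1 + C (53840161671:ℂ) * (X 0)^0 * (X 1)^3) + C (24*β*δ) * (X 0) * (C (59398585488:ℂ) * (X 0)^2 * (X 1)^1 + C (206468708787:ℂ) * (X 0)^0 * (X 1)^3) + C (α) * (C (-466877917440:ℂ) * (X 0)^4 * (X 1)^0 + C (-21516582641184:ℂ) * (X 0)^2 * (X 1)^2 + C (-6875617032333:ℂ) * (X 0)^0 * (X 1)^4) + C (β) * (C (-298344909312:ℂ) * (X 0)^4 * (X 1)^0 + C (-13752106145280:ℂ) * (X 0)^2 * (X 1)^2 + C (-4394491299054:ℂ) * (X 0)^0 * (X 1)^4) + C (48*δ) * (X 0) * (C (191605550544:ℂ) * (X 0)^2 *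 (X 1)^1 + C (665965983645:ℂ) * (X 0)^0 * (X 1)^3) + (C (-1925078503680:ℂ) * (X 0)^4 * (X 1)^0 + C (-88715185482528:ℂ) * (X 0)^2 * (X 1)^2 + C (-28348893570645:ℂ) * (X 0)^0 * (X 1)^4)

def DD : R2 := C (24*α*β*δ) * (X 0) * (C (14408408592:ℂ) * 1 * (X 0)^2 * (X 1)^0 + C (50076004923:ℂ) * 3 * (X 0)^0 * (X 1)^2) + C (α*β) * (C (-3335393797632:ℂ) * 2 * (X 0)^2 * (X 1)^1 + C (-1065820046526:ℂ) * 4 * (X 0)^0 * (X 1)^3) + C (144*α*δ) * (X 0) * (C (15490159728:ℂ) * 1 * (X 0)^2 * (X 1)^0 + C (53840161671:ℂ) * 3 * (X 0)^0 * (X 1)^2) + C (24*β*δ) * (X 0) * (C (59398585488:ℂ) * 1 * (X 0)^2 * (X 1)^0 + C (206468708787:ℂ) * 3 * (X 0)^0 * (X 1)^2) + C (α) * (C (-21516582641184:ℂ) * 2 * (X 0)^2 * (X 1)^1 + C (-6875617032333:ℂ) * 4 * (X 0)^0 * (X 1)^3) + C (β) * (C (-13752106145280:ℂ) * 2 * (X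 0)^2 * (X 1)^1 + C (-4394491299054:ℂ) * 4 * (X 0)^0 * (X 1)^3) + C (48*δ) * (X 0) * (C (191605550544:ℂ) * 1 * (X 0)^2 * (X 1)^0 + C (665965983645:ℂ) * 3 * (X 0)^0 * (X 1)^2) + (C (-88715185482528:ℂ) * 2 * (X 0)^2 * (X 1)^1 + C (-28348893570645:ℂ) * 4 * (X 0)^0 * (X 1)^3)

lemma hD : MvPolynomial.pderiv 1 fQ = DD := by
  simp [fQ, DD, pderiv_mul, pderiv_pow, pderiv_X_self, pderiv_X_of_ne, pderiv_C]
  ring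

def UU : R2 := C ((42721826285135:ℂ)/1341380779642101694464 + (-12197257810039:ℂ)/1341380779642101694464*α + (-29477715625919:ℂ)/335345194910525423616*β + (89144123191:ℂ)/4140064134697844736*α*β) * (X 0)^2 * (X 1)^0 + C ((-2552136591151:ℂ)/670690389821050847232*δ + (97822648861:ℂ)/223563463273683615744*α*δ + (10348274746345:ℂ)/335345194910525423616*β*δ + (-2484802295041:ℂ)/335345194910525423616*α*β*δ) * (X 0)^1 * (X 1)^1 + C ((-2113599428893:ℂ)/335345194910525423616 + (445460566037:ℂ)/335345194910525423616*α + (1336853522315:ℂ)/167672597455262711808*β + (-35430190715:ℂ)/18630288606140301312*α*β) * (X 0)^0 * (X 1)^2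
def VV : R2 := C ((1072054044461:ℂ)/20959074681907838976*δ + (-88196317495:ℂ)/6986358227302612992*α*δ + (-62349993973907:ℂ)/2682761559284203388928*β*δ + (15212949556763:ℂ)/2682761559284203388928*α*β*δ) * (X 0)^3 * (X 1)^0 + C ((-3209574625573:ℂ)/149042308849122410496 + (7891676914117:ℂ)/1341380779642101694464*α + (78525015253741:ℂ)/1341380779642101694464*β + (-19182895997285:ℂ)/1341380779642101694464*α*β) * (X 0)^2 * (X 1)^1 + C ((10373182483:ℂ)/1788507706189468925952*δ + (866685904687:ℂ)/5365523118568406777856*α*δ + (-91971584296621:ℂ)/10731046237136813555712*β*δ + (22037712391973:ℂ)/10731046237136813555712*α*β*δ) * (X 0)^1 * (X 1)^2 + C ((2113599428893:ℂ)/1341380779642101694464 + (-445460566037:ℂ)/1341380779642101694464*α + (-1336853522315:ℂ)/670690389821050847232*β + (35430190715:ℂ)/74521154424561205248*α*β) * (X 0)^0 * (X 1)^3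

lemma hkey : UU * fQ + VV * DD = (X 0 : R2)^6 := by
  apply MvPolynomial.funext
  intro pt
  simp only [UU, fQ, VV, DD, map_add, map_mul, map_pow, map_sub, map_neg, map_ofNat, map_one, map_zero, eval_C, eval_X, pow_zero, pow_one]
  linear_combination (((15719049767589985873760623:ℂ)/24840384808187068416)*(pt 0)^2*(pt 1)^4 + ((1303574258210785752493327:ℂ)/1380021378232614912)*(pt 0)^4*(pt 1)^2 + ((3233157430677955032823:ℂ)/86251336139538432)*(pt 0)^6 + ((-70653078971067933442927:ℂ)/2070032067348922368)*δ^1*(pt 0)^1*(pt 1)^5 + ((-5384895113562748534540009:ℂ)/12420192404093534208)*δ^1*(pt 0)^3*(pt 1)^3 + ((-25708105923050941880867:ℂ)/129377004209307648)*δ^1*(pt 0)^5*(pt 1)^1 + ((5098516192499678163200261:ℂ)/24840384808187068416)*β^1*(pt 0)^2*(pt 1)^4 + ((3211687332664581352540697:ℂ)/6210096202046767104)*β^1*(pt 0)^4*(pt 1)^2 + ((12430213963845030026455:ℂ)/388131012627922944)*β^1*(pt 0)^6 + ((-991228709891520385281839:ℂ)/99361539232748273664)*β^1*δ^1*(pt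 0)^1*(pt 1)^5 + ((-4765763374842564241668449:ℂ)/24840384808187068416)*β^1*δ^1*(pt 0)^3*(pt 1)^3 + ((-73157552778075500164939:ℂ)/517508016837230592)*β^1*δ^1*(pt 0)^5*(pt 1)^1 + ((1192791362668916090074679:ℂ)/8280128269395689472)*α^1*(pt 0)^2*(pt 1)^4 + ((4250591176029586223738233:ℂ)/6210096202046767104)*α^1*(pt 0)^4*(pt 1)^2 + ((21147318105133982645717:ℂ)/388131012627922944)*α^1*(pt 0)^6 + ((-118343510583445121519375:ℂ)/16560256538791378944)*α^1*δ^1*(pt 0)^1*(pt 1)^5 + ((-128573460052253165885335:ℂ)/653694337057554432)*α^1*δ^1*(pt 0)^3*(pt 1)^3 + ((-22505535252705087001595:ℂ)/129377004209307648)*α^1*δ^1*(pt 0)^5*(pt 1)^1 + ((-106483055301583678472663:ℂ)/12420192404093534208)*α^1*β^1*(pt 0)^2*(pt 1)^4 + ((463504304128850202905789:ℂ)/6210096202046767104)*α^1*β^1*(pt 0)^4*(pt 1)^2 + ((3215038115135244290623:ℂ)/388131012627922944)*α^1*β^1*(pt 0)^6 + ((-41422550617077771761095:ℂ)/5520085512930459648)*α^2*(pt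 0)^2*(pt 1)^4 + ((128294872095015779132875:ℂ)/1380021378232614912)*α^2*(pt 0)^4*(pt 1)^2 + ((7610916427198840309295:ℂ)/776262025255845888)*α^2*(pt 0)^6) * alpha_sq + (((-721982972210264187075937:ℂ)/1035016033674461184)*(pt 0)^2*(pt 1)^4 + ((-19583215435811444392915:ℂ)/48516376578490368)*(pt 0)^4*(pt 1)^2 + ((33483059192021995963:ℂ)/1276746752065536)*(pt 0)^6 + ((1238201271556665266461081:ℂ)/49680769616374136832)*δ^1*(pt 0)^1*(pt 1)^5 + ((8235568835074091175742849:ℂ)/12420192404093534208)*δ^1*(pt 0)^3*(pt 1)^3 + ((25364814434361491003045:ℂ)/43125668069769216)*δ^1*(pt 0)^5*(pt 1)^1 + ((1267030537464101854771811:ℂ)/49680769616374136832)*δ^2*(pt 0)^2*(pt 1)^4 + ((-205077957261369345023629:ℂ)/653694337057554432)*δ^2*(pt 0)^4*(pt 1)^2 + ((-25718760050245831811539:ℂ)/776262025255845888)*δ^2*(pt 0)^6 + ((1715123621624231:ℂ)/2632181889024)*α^1*(pt 0)^2*(pt 1)^4 + ((-11240398565801:ℂ)/103901916672)*α^1*(pt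 0)^4*(pt 1)^2 + ((-11249372645635:ℂ)/185075289072)*α^1*(pt 0)^6 + ((14385161201511653:ℂ)/94758548004864)*α^1*δ^1*(pt 0)^1*(pt 1)^5 + ((-4063929855079793:ℂ)/2961204625152)*α^1*δ^1*(pt 0)^3*(pt 1)^3 + ((-262801602770485:ℂ)/329022736128)*α^1*δ^1*(pt 0)^5*(pt 1)^1 + ((-3701833934348035:ℂ)/1516136768077824)*α^1*δ^2*(pt 0)^2*(pt 1)^4 + ((1703552888188349:ℂ)/2961204625152)*α^1*δ^2*(pt 0)^4*(pt 1)^2 + ((30985560754075:ℂ)/658045472256)*α^1*δ^2*(pt 0)^6 + ((127899433091520814868723:ℂ)/3105048101023383552)*α^2*(pt 0)^2*(pt 1)^4 + ((1150698885562863503779:ℂ)/48516376578490368)*α^2*(pt 0)^4*(pt 1)^2 + ((-466802042216070017:ℂ)/299483806040064)*α^2*(pt 0)^6 + ((-23668702116689024303875:ℂ)/16560256538791378944)*α^2*δ^1*(pt 0)^1*(pt 1)^5 + ((-25714692010450633177067:ℂ)/653694337057554432)*α^2*δ^1*(pt 0)^3*(pt 1)^3 + ((-4501107050541017400319:ℂ)/129377004209307648)*α^2*δ^1*(pt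 0)^5*(pt 1)^1 + ((-8284510123415554352219:ℂ)/5520085512930459648)*α^2*δ^2*(pt 0)^2*(pt 1)^4 + ((25658974419003155826575:ℂ)/1380021378232614912)*α^2*δ^2*(pt 0)^4*(pt 1)^2 + ((1522183285439768061859:ℂ)/776262025255845888)*α^2*δ^2*(pt 0)^6) * beta_sq + (((20592123258970227067813211:ℂ)/49680769616374136832)*(pt 0)^2*(pt 1)^4 + ((-2370694296149004706219675:ℂ)/1380021378232614912)*(pt 0)^4*(pt 1)^2 + ((-58305983817278298984901:ℂ)/258754008418615296)*(pt 0)^6 + ((1810284006122127615369031:ℂ)/12420192404093534208)*β^1*(pt 0)^2*(pt 1)^4 + ((-7879618135307026188703885:ℂ)/6210096202046767104)*β^1*(pt 0)^4*(pt 1)^2 + ((-54660981375656041508399:ℂ)/388131012627922944)*β^1*(pt 0)^6 + ((704233580504759700279863:ℂ)/5520085512930459648)*α^1*(pt 0)^2*(pt 1)^4 + ((-2181036284871276838109819:ℂ)/1380021378232614912)*α^1*(pt 0)^4*(pt 1)^2 + ((-129386823548120756283679:ℂ)/776262025255845888)*α^1*(pt 0)^6 + ((735159036353:ℂ)/519937163264)*α^1*β^1*(pt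 0)^2*(pt 1)^4 + ((-60199691429:ℂ)/16248036352)*α^1*β^1*(pt 0)^4*(pt 1)^2 + ((7122484103:ℂ)/2031004544)*α^1*β^1*(pt 0)^6 + ((-1211191693539668919800491:ℂ)/49680769616374136832)*α^2*(pt 0)^2*(pt 1)^4 + ((139446503806999677962219:ℂ)/1380021378232614912)*α^2*(pt 0)^4*(pt 1)^2 + ((3429936180464677055093:ℂ)/258754008418615296)*α^2*(pt 0)^6 + ((-106483055301583678472663:ℂ)/12420192404093534208)*α^2*β^1*(pt 0)^2*(pt 1)^4 + ((463504304128850202905789:ℂ)/6210096202046767104)*α^2*β^1*(pt 0)^4*(pt 1)^2 + ((3215038115135244290623:ℂ)/388131012627922944)*α^2*β^1*(pt 0)^6 + ((-41422550617077771761095:ℂ)/5520085512930459648)*α^3*(pt 0)^2*(pt 1)^4 + ((128294872095015779132875:ℂ)/1380021378232614912)*α^3*(pt 0)^4*(pt 1)^2 + ((7610916427198840309295:ℂ)/776262025255845888)*α^3*(pt 0)^6) * delta_sq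


def ev0 : Fin 2 → ℂ := ![0, 1]

lemma hEval : eval ev0 fQ = -Complex.ofReal (1065820046526*(Real.sqrt 17*Real.sqrt (21+5*Real.sqrt 17)) + 6875617032333*Real.sqrt 17 + 4394491299054*Real.sqrt (21+5*Real.sqrt 17) + 28348893570645) := by
  simp only [fQ, ev0, map_add, map_mul, map_pow, map_neg, map_sub, eval_C, eval_X,
    Matrix.cons_val_zero, Matrix.cons_val_one, Matrix.head_cons, α, β, δ]
  push_cast
  ring

lemma hEvalne : eval ev0 fQ ≠ 0 := by
  rw [hEval]
  simp only [ne_eq, neg_eq_zero, Complex.ofReal_eq_zero]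
  positivity

lemma fQ_ne : fQ ≠ 0 := fun h => hEvalne (by rw [h, map_zero])

lemma Yndvd : ¬ (X 0 : R2) ∣ fQ := by
  rintro ⟨w, hw⟩
  apply hEvalne
  rw [hw, map_mul]
  have : eval ev0 (X 0 : R2) = 0 := by simp [ev0]
  rw [this, zero_mul]

lemma sqfQ : Squarefree fQ := by
  intro r hr
  by_contra hu
  have hrf : r ∣ fQ := (dvd_mul_right r r).trans hr
  have hrD : r ∣ DD := by
    obtain ⟨s, hs⟩ := hr
    rw [← hD, hs, pderiv_mul, pderiv_mul]
    exact dvd_add (dvd_mul_of_dvd_left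
      (dvd_add (dvd_mul_left r _) (dvd_mul_right r _)) s)
      (dvd_mul_of_dvd_left (dvd_mul_right r r) _)
  have h6 : r ∣ (X 0 : R2)^6 := by
    rw [← hkey]
    exact dvd_add (hrf.mul_left UU) (hrD.mul_left VV)
  obtain ⟨i, hi, hassoc⟩ := (dvd_prime_pow primeY 6).1 h6
  match i, hassoc with
  | 0, hassoc =>
    exact hu (associated_one_iff_isUnit.1 (by simpa using hassoc))
  | (n+1), hassoc =>
    have hXr : (X 0 : R2) ∣ r :=
      (dvd_pow_self (X 0 : R2) (Nat.succ_ne_zero n)).trans hassoc.symm.dvd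
    exact Yndvd (hXr.trans hrf)

lemma hFe : (finSuccEquiv ℂ 2) F = Polynomial.C g0 + Polynomial.C g1 * Polynomial.X^1
    + Polynomial.C g2 * Polynomial.X^2 + Polynomial.C g3 * Polynomial.X^3
    + Polynomial.C fQ * Polynomial.X^4 := by
  simp only [F, A1, A2, A3, A4, A5, A6, A7, A8, g0, g1, g2, g3, fQ,
    map_add, map_sub, map_neg, map_mul, map_pow, map_ofNat, fseC, fseY, fseZ, fseX]
  ring

lemma hF4 : ((finSuccEquiv ℂ 2) F).coeff 4 = fQ := by
  rw [hFe]
  simp [Polynomial.coeff_add, Polynomial.coeff_C_mul, Polynomial.coeff_X_pow, Polynomial.coeff_C]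

lemma hCT : cTriple = Complex.ofReal (24*14182182144*(Real.sqrt 17*(Real.sqrt (21+5*Real.sqrt 17)*Real.sqrt (5+Real.sqrt 17))) + 144*15251365120*(Real.sqrt 17*Real.sqrt (5+Real.sqrt 17)) + 24*58496365824*(Real.sqrt (21+5*Real.sqrt 17)*Real.sqrt (5+Real.sqrt 17)) + 48*188641373952*Real.sqrt (5+Real.sqrt 17)) := by
  rw [cTriple, α, β, δ]
  push_cast
  ring

lemma hCTne : cTriple ≠ 0 := by
  rw [hCT]
  simp only [ne_eq, Complex.ofReal_eq_zero]
  positivity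

end Werner


/-- (a) `F` has degree at most 4 in `x` and its coefficient of `x⁴`
(a binary quartic in `y, z`) is nonzero and squarefree, so `{F = 0}` has an ordinary
quadruple point at `p = [1:0:0]`;
(b) every monomial of `F` has combined degree at least 3 in `x` and `z`, and the part
of combined degree exactly 3 is `cTriple·x³y⁵` with `cTriple ≠ 0`, so `{F = 0}` has a
triple point at `p1 = [0:1:0]` with tangent cone the triple line `x = 0`. -/
theorem werner_octic_quadruple_and_triple_point :
    ((∀ m ∈ F.support, m 0 ≤ 4) ∧
      ((finSuccEquiv ℂ 2) F).coeff 4 ≠ 0 ∧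
      Squarefree (((finSuccEquiv ℂ 2) F).coeff 4)) ∧
    ((∀ m ∈ F.support, 3 ≤ m 0 + m 2) ∧
      cTriple ≠ 0 ∧
      (∀ m ∈ (F - C cTriple * x^3 * y^5).support, 4 ≤ m 0 + m 2)) := by
  refine ⟨⟨Werner.stA, ?_, ?_⟩, Werner.stB1, Werner.hCTne, Werner.stB2⟩
  · rw [Werner.hF4]; exact Werner.fQ_ne
  · rw [Werner.hF4]; exact Werner.sqfQ
end
end
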